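/- arXiv:1507.01424 — 5 statements merged into one kernel-verified Lean document; each statement's English description precedes it below -/
import Mathlib

section
/- Suppose H : [0,T]×ℝⁿ×ℝⁿ → ℝ satisfies: (H1) t ↦ H(t,x,p) is measurable for all x,p; (H2) (x,p) ↦ H(t,x,p) is continuous for all t; (H3) p ↦ H(t,x,p) is convex for all (t,x). Let L(t,x,v) := sup_{p∈ℝⁿ} (⟨v,p⟩ − H(t,x,p)). Then: (L2) (x,v) ↦ L(t,x,v) is lower semicontinuous for every t; (L3) v ↦ L(t,x,v) is convex and proper (never −∞, not identically +∞) for every (t,x); (L4) for every (t,x,v) and every sequence x_i → x there exists a sequence v_i → v with L(t,x_i,v_i) → L(t,x,v). If additionally (H4) there is a measurable c : [0,T] → [0,∞) with |H(t,x,p) − H(t,x,q)| ≤ c(t)(1+|x|)|p−q| for all t,x,p,q, then (L5) |v| > c(t)(1+|x|) implies L(t,x,v) = +∞. If additionally H is continuous on [0,T]×ℝⁿ×ℝⁿ, then L is lower semicontinuous on [0,T]×ℝⁿ×ℝⁿ and (L6) for every (t,x,v) and every sequence (t_i,x_i) → (t,x) there exists v_i → v with L(t_i,x_i,v_i) → L(t,x,v).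 -/
open Filter Topology MeasureTheory Set Metric
open scoped RealInnerProductSpace Pointwise

noncomputable section

abbrev Eucl (n : ℕ) := EuclideanSpace ℝ (Fin n)

/-- Legendre–Fenchel transform in the last variable of a real-valued Hamiltonian:
`LFT H t x v = sup_p (⟪v,p⟫ − H t x p)`, with values in `EReal = ℝ ∪ {±∞}`. -/
def LFT {n : ℕ} (H : ℝ → Eucl n → Eucl n → ℝ) (t : ℝ) (x v : Eucl n) : EReal :=
  ⨆ p : Eucl n, ((⟪v, p⟫ - H t x p : ℝ) : EReal)

/-- Epigraph `E_L(t,x) = {(v,η) | L(t,x,v) ≤ η}` of the Lagrangian `L = LFT H`. -/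
def epiL {n : ℕ} (H : ℝ → Eucl n → Eucl n → ℝ) (t : ℝ) (x : Eucl n) : Set (Eucl n × ℝ) :=
  {q | LFT H t x q.1 ≤ (q.2 : EReal)}

/-- Legendre–Fenchel conjugate of an extended-real-valued function. -/
def eConj {n : ℕ} (φ : Eucl n → EReal) (v : Eucl n) : EReal :=
  ⨆ p : Eucl n, (((⟪v, p⟫ : ℝ) : EReal) - φ p)

/-- A modulus: `w(·,r)` measurable, `w(t,·)` nonnegative, nondecreasing, continuous,
subadditive with `w(t,0) = 0`. -/
def IsModulus (w : ℝ → ℝ → ℝ) : Prop :=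
  (∀ r, Measurable fun t => w t r) ∧
  ∀ t, (∀ r, 0 ≤ w t r) ∧ Monotone (w t) ∧ Continuous (w t) ∧
    (∀ a b : ℝ, 0 ≤ a → 0 ≤ b → w t (a + b) ≤ w t a + w t b) ∧ w t 0 = 0

/-- Convexity of an `EReal`-valued function. -/
def EConvex {F : Type*} [AddCommMonoid F] [Module ℝ F] (φ : F → EReal) : Prop :=
  ∀ v u : F, ∀ a b : ℝ, 0 ≤ a → 0 ≤ b → a + b = 1 →
    φ (a • v + b • u) ≤ (a : EReal) * φ v + (b : EReal) * φ u

/-- A proper extended-real-valued function: never `−∞` and not identically `+∞`. -/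
def EProper {F : Type*} (φ : F → EReal) : Prop :=
  (∀ v, φ v ≠ ⊥) ∧ ∃ v, φ v ≠ ⊤

/-!
`L(t, x, ·)` is a supremum of functions that are affine in `v` and continuous in `(t, x, v)`,
which gives lower semicontinuity and convexity; an affine minorant of the convex function
`H(t, x, ·)` (Hahn–Banach) makes `L(t, x, ·)` finite somewhere, and a linear growth bound on
`H(t, x, ·)` makes it `+∞` beyond the growth rate.

For the recovery sequences, `H(tᵢ, xᵢ, ·) → H(t, x, ·)` locally uniformly, and
`liminf L(tᵢ, xᵢ, vᵢ) ≥ L(t, x, v)` along every `vᵢ → v` by pointwise convergence. If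
`L(t, x, v) = r` is finite, let `pᵢ` maximise `⟪v, p⟫ - H(tᵢ, xᵢ, p) - λ/2 ‖p‖²`. Then
`v - λ pᵢ` is a subgradient of `H(tᵢ, xᵢ, ·)` at `pᵢ`, it lies within `ε` of `v` when
`λ ≈ ε²`, and its conjugate value is at most `r + ε` as soon as `H(tᵢ, xᵢ, ·)` is `ε`-close to
`H(t, x, ·)` on a ball containing all these maximisers. A diagonal choice of `ε → 0` finishes.
-/

section Convex

variable {E : Type*} [NormedAddCommGroup E] [NormedSpace ℝ E]

/-- Compare `f` on the segment from `0` to `p` at the point of norm one. -/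
lemma ConvexOn.neg_le_of_abs_le_on_closedBall {f : E → ℝ} (hf : ConvexOn ℝ univ f) {A : ℝ}
    (hA : ∀ q ∈ closedBall (0 : E) 1, |f q| ≤ A) (p : E) : -A - 2 * A * ‖p‖ ≤ f p := by
  have hA0 : 0 ≤ A := (abs_nonneg _).trans (hA 0 (mem_closedBall_self zero_le_one))
  have hf0 := abs_le.1 (hA 0 (mem_closedBall_self zero_le_one))
  rcases le_or_gt ‖p‖ 1 with hp | hp
  · nlinarith [(abs_le.1 (hA p (mem_closedBall_zero_iff.2 hp))).1, norm_nonneg p]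
  set θ := ‖p‖⁻¹
  have hθ : θ * ‖p‖ = 1 := inv_mul_cancel₀ (by positivity)
  have hθ0 : 0 < θ := by positivity
  have hθ1 : θ ≤ 1 := inv_le_one_of_one_le₀ hp.le
  have hseg : f (θ • p) ≤ θ * f p + (1 - θ) * f 0 := by
    simpa using hf.2 (mem_univ p) (mem_univ 0) hθ0.le (sub_nonneg.2 hθ1) (by ring)
  have hθp : θ • p ∈ closedBall (0 : E) 1 := by
    rw [mem_closedBall_zero_iff, norm_smul, Real.norm_of_nonneg hθ0.le, hθ]
  nlinarith [(abs_le.1 (hA _ hθp)).1]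

lemma ConvexOn.le_of_forall_le_add_mul_norm_sub_sq {f : E → ℝ} (hf : ConvexOn ℝ univ f)
    {p₀ : E} {c : ℝ} (h : ∀ p, f p₀ ≤ f p + c * ‖p - p₀‖ ^ 2) (p : E) : f p₀ ≤ f p := by
  have hseg : ∀ s ∈ Ioo (0 : ℝ) 1, f p₀ ≤ f p + c * s * ‖p - p₀‖ ^ 2 := by
    rintro s ⟨hs0, hs1⟩
    have hconv : f ((1 - s) • p₀ + s • p) ≤ (1 - s) * f p₀ + s * f p :=
      hf.2 (mem_univ p₀) (mem_univ p) (sub_nonneg.2 hs1.le) hs0.le (by ring)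
    have hq := h ((1 - s) • p₀ + s • p)
    rw [show (1 - s) • p₀ + s • p - p₀ = s • (p - p₀) by module, norm_smul,
      Real.norm_of_nonneg hs0.le] at hq
    have : s * f p₀ ≤ s * (f p + c * s * ‖p - p₀‖ ^ 2) := by nlinarith
    exact le_of_mul_le_mul_left this hs0
  have hlim : Tendsto (fun s => f p + c * s * ‖p - p₀‖ ^ 2) (𝓝[>] 0) (𝓝 (f p)) := by
    have hcont : Continuous fun s : ℝ => f p + c * s * ‖p - p₀‖ ^ 2 := by fun_prop
    simpa using (hcont.tendsto 0).mono_left nhdsWithin_le_nhds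
  exact ge_of_tendsto hlim (eventually_of_mem (Ioo_mem_nhdsGT one_pos) hseg)

end Convex

lemma Filter.exists_tendsto_atTop_eventually {Q : ℕ → ℕ → Prop}
    (hQ : ∀ k, ∀ᶠ i in atTop, Q k i) :
    ∃ κ : ℕ → ℕ, Tendsto κ atTop atTop ∧ ∀ᶠ i in atTop, Q (κ i) i := by
  classical
  choose N hN using fun k => eventually_atTop.1 (hQ k)
  refine ⟨fun i => Nat.findGreatest (fun k => ∀ j ≤ k, N j ≤ i) i,
    tendsto_atTop.2 fun k => ?_, ?_⟩
  · filter_upwards [eventually_ge_atTop k, (eventually_all_finset (Finset.range (k + 1))).2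
      fun j _ => eventually_ge_atTop (N j)] with i hik hiN
    exact Nat.le_findGreatest hik fun j hj => hiN j (Finset.mem_range_succ_iff.2 hj)
  · filter_upwards [eventually_ge_atTop (N 0)] with i hi
    refine hN _ i (Nat.findGreatest_spec (P := fun k => ∀ j ≤ k, N j ≤ i) (Nat.zero_le i)
      (fun j hj => ?_) _ le_rfl)
    rwa [Nat.le_zero.1 hj]

lemma ContinuousOn.tendstoLocallyUniformly_of_tendsto {X Y Z : Type*} [TopologicalSpace X]
    [TopologicalSpace Y] [WeaklyLocallyCompactSpace Y] [UniformSpace Z] {F : X → Y → Z}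
    {s : Set X} (hF : ContinuousOn (Function.uncurry F) (s ×ˢ univ)) {z : ℕ → X} {z₀ : X}
    (hz₀ : z₀ ∈ s) (hz : ∀ i, z i ∈ s) (hzt : Tendsto z atTop (𝓝 z₀)) :
    TendstoLocallyUniformly (fun i => F (z i)) (F z₀) atTop := by
  let Φ : C(s, C(Y, Z)) := ContinuousMap.curry
    ⟨fun q : s × Y => F q.1 q.2, hF.comp_continuous (f := fun q : s × Y => ((q.1 : X), q.2))
      (by fun_prop) fun q => ⟨q.1.2, mem_univ _⟩⟩
  have hzs : Tendsto (fun i => (⟨z i, hz i⟩ : s)) atTop (𝓝 ⟨z₀, hz₀⟩) :=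
    tendsto_subtype_rng.2 hzt
  exact ContinuousMap.tendsto_iff_tendstoLocallyUniformly.1 ((Φ.continuous.tendsto _).comp hzs)

section FenchelConj

variable {E : Type*} [NormedAddCommGroup E] [InnerProductSpace ℝ E]

def fenchelConj (f : E → ℝ) (v : E) : EReal :=
  ⨆ p, ((⟪v, p⟫ - f p : ℝ) : EReal)

lemma le_fenchelConj (f : E → ℝ) (v p : E) : ((⟪v, p⟫ - f p : ℝ) : EReal) ≤ fenchelConj f v :=
  le_iSup (fun p => ((⟪v, p⟫ - f p : ℝ) : EReal)) p

lemma fenchelConj_le_coe_iff {f : E → ℝ} {v : E} {r : ℝ} :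
    fenchelConj f v ≤ r ↔ ∀ p, ⟪v, p⟫ - f p ≤ r := by
  simp only [fenchelConj, iSup_le_iff, EReal.coe_le_coe_iff]

lemma fenchelConj_ne_bot (f : E → ℝ) (v : E) : fenchelConj f v ≠ ⊥ :=
  ne_bot_of_le_ne_bot (EReal.coe_ne_bot _) (le_fenchelConj f v 0)

lemma econvex_fenchelConj (f : E → ℝ) : EConvex (fenchelConj f) := by
  intro v u a b ha hb hab
  refine iSup_le fun p => ?_
  have hsplit : ⟪a • v + b • u, p⟫ - f p = a * (⟪v, p⟫ - f p) + b * (⟪u, p⟫ - f p) := by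
    rw [inner_add_left, real_inner_smul_left, real_inner_smul_left]
    linear_combination f p * hab
  rw [hsplit, EReal.coe_add, EReal.coe_mul, EReal.coe_mul]
  gcongr <;> exact le_fenchelConj f _ p

lemma exists_fenchelConj_ne_top [CompleteSpace E] {f : E → ℝ} (hf : ConvexOn ℝ univ f)
    (hfc : Continuous f) : ∃ v, fenchelConj f v ≠ ⊤ := by
  obtain ⟨l, c, hl, -⟩ := hf.exists_affine_le_of_lt (𝕜 := ℝ) (mem_univ 0) (sub_one_lt (f 0))
    isClosed_univ (hfc.lowerSemicontinuous.lowerSemicontinuousOn _)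
  refine ⟨(InnerProductSpace.toDual ℝ E).symm l, ne_top_of_le_ne_top (EReal.coe_ne_top (-c))
    (fenchelConj_le_coe_iff.2 fun p => ?_)⟩
  have hlp : l p + c ≤ f p := hl ⟨p, mem_univ p⟩
  rw [InnerProductSpace.toDual_symm_apply]
  linarith

lemma fenchelConj_eq_top_of_le_add_mul_norm {f : E → ℝ} {C K : ℝ} (hK : 0 ≤ K)
    (hf : ∀ p, f p ≤ C + K * ‖p‖) {v : E} (hv : K < ‖v‖) : fenchelConj f v = ⊤ := by
  have hv0 : 0 < ‖v‖ := hK.trans_lt hv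
  refine (EReal.eq_top_iff_forall_lt _).2 fun M => ?_
  have hlin : Tendsto (fun s : ℝ => s * (‖v‖ * (‖v‖ - K)) + -C) atTop atTop :=
    tendsto_atTop_add_const_right _ _ (tendsto_id.atTop_mul_const (by nlinarith))
  obtain ⟨s, hs, hs0⟩ := (hlin.eventually_gt_atTop M).and (eventually_ge_atTop 0) |>.exists
  refine (EReal.coe_lt_coe_iff.2 hs).trans_le ((EReal.coe_le_coe_iff.2 ?_).trans
    (le_fenchelConj f v (s • v)))
  have hfs : f (s • v) ≤ C + K * (s * ‖v‖) := by
    simpa only [norm_smul, Real.norm_of_nonneg hs0] using hf (s • v)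
  rw [real_inner_smul_right, real_inner_self_eq_norm_sq]
  nlinarith

lemma lowerSemicontinuousOn_fenchelConj {X : Type*} [TopologicalSpace X] {F : X → E → ℝ}
    {V : X → E} {s : Set X} (hF : ∀ p, ContinuousOn (fun z => F z p) s) (hV : ContinuousOn V s) :
    LowerSemicontinuousOn (fun z => fenchelConj (F z) (V z)) s :=
  lowerSemicontinuousOn_iSup fun p => (continuous_coe_real_ereal.comp_continuousOn
    ((hV.inner continuousOn_const).sub (hF p))).lowerSemicontinuousOn

lemma eventually_lt_fenchelConj_of_tendsto {ι : Type*} {l : Filter ι} {f : ι → E → ℝ}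
    {g : E → ℝ} (hfg : ∀ p, Tendsto (fun i => f i p) l (𝓝 (g p))) {w : ι → E} {v : E}
    (hw : Tendsto w l (𝓝 v)) {b : EReal} (hb : b < fenchelConj g v) :
    ∀ᶠ i in l, b < fenchelConj (f i) (w i) := by
  obtain ⟨p, hp⟩ := lt_iSup_iff.1 hb
  have hterm : Tendsto (fun i => ((⟪w i, p⟫ - f i p : ℝ) : EReal)) l
      (𝓝 ((⟪v, p⟫ - g p : ℝ) : EReal)) :=
    (continuous_coe_real_ereal.tendsto _).comp ((hw.inner tendsto_const_nhds).sub (hfg p))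
  filter_upwards [hterm.eventually (eventually_gt_nhds hp)] with i hi
  exact hi.trans_le (le_fenchelConj _ _ p)

end FenchelConj

section Proximal

variable {E : Type*} [NormedAddCommGroup E] [InnerProductSpace ℝ E]

/-- Completing the square, `p₀` minimises `f p - ⟪v - lam • p₀, p⟫ + lam / 2 * ‖p - p₀‖ ^ 2`. -/
lemma ConvexOn.inner_sub_le_of_prox_maximizer {f : E → ℝ} (hf : ConvexOn ℝ univ f) {v p₀ : E}
    {lam : ℝ}
    (hmax : ∀ p, ⟪v, p⟫ - f p - lam / 2 * ‖p‖ ^ 2 ≤ ⟪v, p₀⟫ - f p₀ - lam / 2 * ‖p₀‖ ^ 2)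
    (p : E) : ⟪v - lam • p₀, p⟫ - f p ≤ ⟪v - lam • p₀, p₀⟫ - f p₀ := by
  have hconv : ConvexOn ℝ univ fun p => f p - ⟪v - lam • p₀, p⟫ :=
    hf.sub ((innerₛₗ ℝ (v - lam • p₀)).concaveOn convex_univ)
  have key := hconv.le_of_forall_le_add_mul_norm_sub_sq (c := lam / 2) (p₀ := p₀) (fun q => by
    have := hmax q
    rw [norm_sub_sq_real, inner_sub_left, inner_sub_left, real_inner_smul_left,
      real_inner_smul_left, real_inner_self_eq_norm_sq, real_inner_comm p₀ q]
    nlinarith) p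
  linarith

lemma exists_radius_forall_exists_prox_maximizer [ProperSpace E] (v : E) (B : ℝ) {lam : ℝ}
    (hlam : 0 < lam) :
    ∃ ρ, ∀ f : E → ℝ, ConvexOn ℝ univ f → Continuous f →
      (∀ q ∈ closedBall (0 : E) 1, |f q| ≤ B) → ∃ p₀ ∈ closedBall (0 : E) ρ, ∀ p,
        ⟪v, p⟫ - f p - lam / 2 * ‖p‖ ^ 2 ≤ ⟪v, p₀⟫ - f p₀ - lam / 2 * ‖p₀‖ ^ 2 := by
  set ρ := max 1 (2 * (‖v‖ + 4 * B + 1) / lam)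
  refine ⟨ρ, fun f hf hfc hB => ?_⟩
  set G := fun p => ⟪v, p⟫ - f p - lam / 2 * ‖p‖ ^ 2
  have hf0 := abs_le.1 (hB 0 (mem_closedBall_self zero_le_one))
  have hfar : ∀ p, ρ < ‖p‖ → G p < G 0 := by
    intro p hp
    have h1 : 1 ≤ ‖p‖ := (le_max_left _ _).trans hp.le
    have h2 : 2 * (‖v‖ + 4 * B + 1) ≤ lam * ‖p‖ :=
      (div_le_iff₀' hlam).1 ((le_max_right _ _).trans hp.le)
    have hlow := hf.neg_le_of_abs_le_on_closedBall hB p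
    have hvp := real_inner_le_norm v p
    simp only [G, inner_zero_right, norm_zero]
    nlinarith
  have hGc : Continuous G := by fun_prop
  obtain ⟨p₀, hp₀⟩ := hGc.exists_forall_ge' 0 <| by
    filter_upwards [(isCompact_closedBall (0 : E) ρ).compl_mem_cocompact] with p hp
    exact (hfar p (not_le.1 (mt mem_closedBall_zero_iff.2 hp))).le
  refine ⟨p₀, mem_closedBall_zero_iff.2 (not_lt.1 fun h => ?_), hp₀⟩
  exact (hfar p₀ h).not_ge (hp₀ 0)

/-- The witness is `u = v - lam • p₀` for the proximal maximiser `p₀` of `f` at `v`, with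
`lam = ε ^ 2 / (|r| + A + 2)`. -/
lemma exists_radius_forall_exists_fenchelConj_le [ProperSpace E] {g : E → ℝ} {v : E}
    {r A ε : ℝ} (hε : 0 < ε) (hε1 : ε ≤ 1) (hgA : ∀ q ∈ closedBall (0 : E) 1, |g q| ≤ A)
    (hgv : fenchelConj g v ≤ r) :
    ∃ ρ, ∀ f : E → ℝ, ConvexOn ℝ univ f → Continuous f →
      (∀ p ∈ closedBall (0 : E) ρ, |f p - g p| ≤ ε) →
        ∃ u, ‖u - v‖ ≤ ε ∧ fenchelConj f u ≤ ((r + ε : ℝ) : EReal) := by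
  have hA0 : 0 ≤ A := (abs_nonneg _).trans (hgA 0 (mem_closedBall_self zero_le_one))
  set lam := ε ^ 2 / (|r| + A + 2)
  have hD : 0 < |r| + A + 2 := by positivity
  have hlam : 0 < lam := by positivity
  obtain ⟨ρ₀, hρ₀⟩ := exists_radius_forall_exists_prox_maximizer v (A + 1) hlam
  refine ⟨max 1 ρ₀, fun f hf hfc hfg => ?_⟩
  have hfB : ∀ q ∈ closedBall (0 : E) 1, |f q| ≤ A + 1 := fun q hq => by
    have := hfg q (closedBall_subset_closedBall (le_max_left _ _) hq)
    have := hgA q hq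
    rw [abs_le] at *
    constructor <;> linarith
  obtain ⟨p₀, hp₀, hmax⟩ := hρ₀ f hf hfc hfB
  have hsub := hf.inner_sub_le_of_prox_maximizer hmax
  have hfg₀ := abs_le.1 (hfg p₀ (closedBall_subset_closedBall (le_max_right _ _) hp₀))
  have hgv₀ := fenchelConj_le_coe_iff.1 hgv p₀
  have hinner : ⟪v - lam • p₀, p₀⟫ = ⟪v, p₀⟫ - lam * ‖p₀‖ ^ 2 := by
    rw [inner_sub_left, real_inner_smul_left, real_inner_self_eq_norm_sq]
  rw [hinner] at hsub
  refine ⟨v - lam • p₀, ?_, fenchelConj_le_coe_iff.2 fun p => ?_⟩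
  · rw [sub_sub_cancel_left, norm_neg, norm_smul, Real.norm_of_nonneg hlam.le]
    have h0 := hsub 0
    have hf0 := abs_le.1 (hfB 0 (mem_closedBall_self zero_le_one))
    simp only [inner_zero_right, zero_sub] at h0
    have hbound : lam * ‖p₀‖ ^ 2 ≤ |r| + A + 2 := by linarith [le_abs_self r]
    have hsq : (lam * ‖p₀‖) ^ 2 ≤ ε ^ 2 := by
      calc (lam * ‖p₀‖) ^ 2 = lam * (lam * ‖p₀‖ ^ 2) := by ring
        _ ≤ lam * (|r| + A + 2) := by gcongr
        _ = ε ^ 2 := div_mul_cancel₀ _ hD.ne'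
    exact (pow_le_pow_iff_left₀ (by positivity) hε.le two_ne_zero).1 hsq
  · nlinarith [hsub p, sq_nonneg ‖p₀‖]

end Proximal

section Approximation

variable {E : Type*} [NormedAddCommGroup E] [InnerProductSpace ℝ E] [ProperSpace E]
  {f : ℕ → E → ℝ} {g : E → ℝ}

lemma exists_tendsto_eventually_fenchelConj_lt (hf : ∀ i, ConvexOn ℝ univ (f i))
    (hfc : ∀ i, Continuous (f i)) (hfg : TendstoLocallyUniformly f g atTop) {v : E} {r : ℝ}
    (hr : fenchelConj g v ≤ r) :
    ∃ w : ℕ → E, Tendsto w atTop (𝓝 v) ∧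
      ∀ b > (r : EReal), ∀ᶠ i in atTop, fenchelConj (f i) (w i) < b := by
  obtain ⟨A, hA⟩ := (isCompact_closedBall (0 : E) 1).exists_bound_of_continuousOn
    (hfg.continuous (Frequently.of_forall hfc)).continuousOn
  have hstep : ∀ k : ℕ, ∀ᶠ i in atTop, ∃ u, ‖u - v‖ ≤ 1 / (k + 1) ∧
      fenchelConj (f i) u ≤ ((r + 1 / (k + 1) : ℝ) : EReal) := by
    intro k
    have hk : (1 : ℝ) / (k + 1) ≤ 1 := div_le_one_of_le₀ (by simp) (by positivity)
    obtain ⟨ρ, hρ⟩ := exists_radius_forall_exists_fenchelConj_le (by positivity) hk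
      (fun q hq => Real.norm_eq_abs (g q) ▸ hA q hq) hr
    filter_upwards [Metric.tendstoUniformlyOn_iff.1 (tendstoLocallyUniformly_iff_forall_isCompact.1
      hfg _ (isCompact_closedBall 0 ρ)) _ (by positivity : (0 : ℝ) < 1 / (k + 1))] with i hi
    exact hρ (f i) (hf i) (hfc i) fun p hp => by
      rw [abs_sub_comm, ← Real.dist_eq]
      exact (hi p hp).le
  obtain ⟨κ, hκ, hκstep⟩ := exists_tendsto_atTop_eventually hstep
  obtain ⟨w, hw⟩ := skolem.1 hκstep
  have hδ : Tendsto (fun i => 1 / ((κ i : ℝ) + 1)) atTop (𝓝 0) :=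
    tendsto_one_div_add_atTop_nhds_zero_nat.comp hκ
  refine ⟨w, tendsto_iff_norm_sub_tendsto_zero.2 ?_, fun b hb => ?_⟩
  · exact squeeze_zero' (Eventually.of_forall fun i => norm_nonneg _) (hw.mono fun i hi => hi.1) hδ
  · have hbound : Tendsto (fun i => ((r + 1 / ((κ i : ℝ) + 1) : ℝ) : EReal)) atTop (𝓝 r) :=
      (continuous_coe_real_ereal.tendsto _).comp (by simpa using hδ.const_add r)
    filter_upwards [hw, hbound.eventually (eventually_lt_nhds hb)] with i hi hlt
    exact hi.2.trans_lt hlt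

theorem exists_tendsto_fenchelConj_of_tendstoLocallyUniformly (hf : ∀ i, ConvexOn ℝ univ (f i))
    (hfc : ∀ i, Continuous (f i)) (hfg : TendstoLocallyUniformly f g atTop) (v : E) :
    ∃ w : ℕ → E, Tendsto w atTop (𝓝 v) ∧
      Tendsto (fun i => fenchelConj (f i) (w i)) atTop (𝓝 (fenchelConj g v)) := by
  have hpt : ∀ p, Tendsto (fun i => f i p) atTop (𝓝 (g p)) := fun p =>
    hfg.tendsto_comp (hfg.continuous (Frequently.of_forall hfc)).continuousAt tendsto_const_nhds
  by_cases htop : fenchelConj g v = ⊤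
  · refine ⟨fun _ => v, tendsto_const_nhds, tendsto_order.2 ⟨fun b hb => ?_, fun b hb => ?_⟩⟩
    · exact eventually_lt_fenchelConj_of_tendsto hpt tendsto_const_nhds hb
    · exact (not_top_lt (htop ▸ hb)).elim
  have hr := (EReal.coe_toReal htop (fenchelConj_ne_bot g v)).symm
  obtain ⟨w, hw, hupper⟩ := exists_tendsto_eventually_fenchelConj_lt hf hfc hfg hr.le
  refine ⟨w, hw, tendsto_order.2 ⟨fun b hb => ?_, fun b hb => hupper b (hr ▸ hb)⟩⟩
  exact eventually_lt_fenchelConj_of_tendsto hpt hw hb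

end Approximation

theorem lagrangian_properties_general (n : ℕ) (T : ℝ)
    (H : ℝ → Eucl n → Eucl n → ℝ)
    (h2 : ∀ t ∈ Icc (0 : ℝ) T, Continuous fun q : Eucl n × Eucl n => H t q.1 q.2)
    (h3 : ∀ t ∈ Icc (0 : ℝ) T, ∀ x : Eucl n, ConvexOn ℝ univ (H t x)) :
    -- (L2) lower semicontinuity in (x,v)
    (∀ t ∈ Icc (0 : ℝ) T,
      LowerSemicontinuous fun q : Eucl n × Eucl n => LFT H t q.1 q.2) ∧
    -- (L3) convexity and properness in v
    (∀ t ∈ Icc (0 : ℝ) T, ∀ x : Eucl n,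
      EConvex (LFT H t x) ∧ EProper (LFT H t x)) ∧
    -- (L4)
    (∀ t ∈ Icc (0 : ℝ) T, ∀ (x v : Eucl n), ∀ xi : ℕ → Eucl n,
      Tendsto xi atTop (𝓝 x) →
      ∃ vi : ℕ → Eucl n, Tendsto vi atTop (𝓝 v) ∧
        Tendsto (fun i => LFT H t (xi i) (vi i)) atTop (𝓝 (LFT H t x v))) ∧
    -- (L5) under (H4)
    (∀ c : ℝ → ℝ, Measurable c → (∀ t, 0 ≤ c t) →
      (∀ t ∈ Icc (0 : ℝ) T, ∀ (x p q : Eucl n),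
        |H t x p - H t x q| ≤ c t * (1 + ‖x‖) * ‖p - q‖) →
      ∀ t ∈ Icc (0 : ℝ) T, ∀ (x v : Eucl n),
        c t * (1 + ‖x‖) < ‖v‖ → LFT H t x v = ⊤) ∧
    -- joint lower semicontinuity and (L6) under joint continuity of `H`
    (ContinuousOn (fun q : ℝ × Eucl n × Eucl n => H q.1 q.2.1 q.2.2)
        (Icc (0 : ℝ) T ×ˢ (univ : Set (Eucl n × Eucl n))) →
      LowerSemicontinuousOn (fun q : ℝ × Eucl n × Eucl n => LFT H q.1 q.2.1 q.2.2)
        (Icc (0 : ℝ) T ×ˢ (univ : Set (Eucl n × Eucl n))) ∧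
      ∀ t ∈ Icc (0 : ℝ) T, ∀ (x v : Eucl n), ∀ (ti : ℕ → ℝ) (xi : ℕ → Eucl n),
        (∀ i, ti i ∈ Icc (0 : ℝ) T) → Tendsto ti atTop (𝓝 t) → Tendsto xi atTop (𝓝 x) →
        ∃ vi : ℕ → Eucl n, Tendsto vi atTop (𝓝 v) ∧
          Tendsto (fun i => LFT H (ti i) (xi i) (vi i)) atTop (𝓝 (LFT H t x v))) := by
  have hHt : ∀ t ∈ Icc (0 : ℝ) T, ∀ x, Continuous (H t x) := fun t ht x =>
    (h2 t ht).comp (continuous_const.prodMk continuous_id)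
  refine ⟨fun t ht => ?_, fun t ht x => ?_, fun t ht x v xi hxi => ?_,
    fun c _ hc hlip t ht x v hv => ?_, fun hcont => ⟨?_, fun t ht x v ti xi hti hto hxi => ?_⟩⟩
  · exact lowerSemicontinuousOn_univ_iff.1 <| lowerSemicontinuousOn_fenchelConj
      (fun p => ((h2 t ht).comp (continuous_fst.prodMk continuous_const)).continuousOn)
      continuous_snd.continuousOn
  · exact ⟨econvex_fenchelConj _, fenchelConj_ne_bot _, exists_fenchelConj_ne_top (h3 t ht x)
      (hHt t ht x)⟩
  · exact exists_tendsto_fenchelConj_of_tendstoLocallyUniformly (fun i => h3 t ht (xi i))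
      (fun i => hHt t ht (xi i)) ((h2 t ht).continuousOn.tendstoLocallyUniformly_of_tendsto
        (F := H t) (mem_univ x) (fun _ => mem_univ _) hxi) v
  · refine fenchelConj_eq_top_of_le_add_mul_norm (C := H t x 0)
      (mul_nonneg (hc t) (by positivity)) (fun p => ?_) hv
    simpa only [sub_zero] using sub_le_iff_le_add'.1 ((le_abs_self _).trans (hlip t ht x p 0))
  · have hF : ∀ p, ContinuousOn (fun q : ℝ × Eucl n × Eucl n => H q.1 q.2.1 p)
        (Icc 0 T ×ˢ univ) := fun p => hcont.comp
      (continuous_fst.prodMk (continuous_snd.fst.prodMk continuous_const)).continuousOn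
      fun q hq => ⟨hq.1, mem_univ _⟩
    exact lowerSemicontinuousOn_fenchelConj hF continuous_snd.snd.continuousOn
  · refine exists_tendsto_fenchelConj_of_tendstoLocallyUniformly (fun i => h3 _ (hti i) (xi i))
      (fun i => hHt _ (hti i) (xi i)) ?_ v
    exact ContinuousOn.tendstoLocallyUniformly_of_tendsto (F := fun z : ℝ × Eucl n => H z.1 z.2)
      (s := Icc 0 T ×ˢ univ) (hcont.comp
      (f := fun q : (ℝ × Eucl n) × Eucl n => (q.1.1, q.1.2, q.2)) (by fun_prop)
      fun q hq => ⟨hq.1.1, mem_univ _⟩)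
      ⟨ht, mem_univ x⟩ (fun i => ⟨hti i, mem_univ _⟩) (hto.prodMk_nhds hxi)

/-- Proposition 2.1 of the paper. Properties (L2)–(L6) of the Lagrangian
`L = LFT H` obtained from a Hamiltonian `H` satisfying (H1)–(H3), and additionally (H4),
respectively joint continuity of `H`. -/
theorem lagrangian_properties (n : ℕ) (T : ℝ) (hT : 0 ≤ T)
    (H : ℝ → Eucl n → Eucl n → ℝ)
    (h1 : ∀ (x p : Eucl n), Measurable fun t => H t x p)
    (h2 : ∀ t ∈ Icc (0 : ℝ) T, Continuous fun q : Eucl n × Eucl n => H t q.1 q.2)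
    (h3 : ∀ t ∈ Icc (0 : ℝ) T, ∀ x : Eucl n, ConvexOn ℝ univ (H t x)) :
    -- (L2) lower semicontinuity in (x,v)
    (∀ t ∈ Icc (0 : ℝ) T,
      LowerSemicontinuous fun q : Eucl n × Eucl n => LFT H t q.1 q.2) ∧
    -- (L3) convexity and properness in v
    (∀ t ∈ Icc (0 : ℝ) T, ∀ x : Eucl n,
      EConvex (LFT H t x) ∧ EProper (LFT H t x)) ∧
    -- (L4)
    (∀ t ∈ Icc (0 : ℝ) T, ∀ (x v : Eucl n), ∀ xi : ℕ → Eucl n,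
      Tendsto xi atTop (𝓝 x) →
      ∃ vi : ℕ → Eucl n, Tendsto vi atTop (𝓝 v) ∧
        Tendsto (fun i => LFT H t (xi i) (vi i)) atTop (𝓝 (LFT H t x v))) ∧
    -- (L5) under (H4)
    (∀ c : ℝ → ℝ, Measurable c → (∀ t, 0 ≤ c t) →
      (∀ t ∈ Icc (0 : ℝ) T, ∀ (x p q : Eucl n),
        |H t x p - H t x q| ≤ c t * (1 + ‖x‖) * ‖p - q‖) →
      ∀ t ∈ Icc (0 : ℝ) T, ∀ (x v : Eucl n),
        c t * (1 + ‖x‖) < ‖v‖ → LFT H t x v = ⊤) ∧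
    -- joint lower semicontinuity and (L6) under joint continuity of `H`
    (ContinuousOn (fun q : ℝ × Eucl n × Eucl n => H q.1 q.2.1 q.2.2)
        (Icc (0 : ℝ) T ×ˢ (univ : Set (Eucl n × Eucl n))) →
      LowerSemicontinuousOn (fun q : ℝ × Eucl n × Eucl n => LFT H q.1 q.2.1 q.2.2)
        (Icc (0 : ℝ) T ×ˢ (univ : Set (Eucl n × Eucl n))) ∧
      ∀ t ∈ Icc (0 : ℝ) T, ∀ (x v : Eucl n), ∀ (ti : ℕ → ℝ) (xi : ℕ → Eucl n),
        (∀ i, ti i ∈ Icc (0 : ℝ) T) → Tendsto ti atTop (𝓝 t) → Tendsto xi atTop (𝓝 x) →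
        ∃ vi : ℕ → Eucl n, Tendsto vi atTop (𝓝 v) ∧
          Tendsto (fun i => LFT H (ti i) (xi i) (vi i)) atTop (𝓝 (LFT H t x v))) :=
  lagrangian_properties_general n T H h2 h3
end
end

section
/- Fix t ∈ [0,T] and x,y ∈ ℝⁿ, and constants k ≥ 0 and w ≥ 0. Suppose p ↦ H(t,x,p) and p ↦ H(t,y,p) are proper, convex and lower semicontinuous, and let L(t,x,·) := H*(t,x,·) and L(t,y,·) := H*(t,y,·). Then the following are equivalent: (a) H(t,x,p) ≤ H(t,y,p) + k|p||x−y| + w for all p ∈ ℝⁿ; (b) for all v ∈ dom L(t,x,·) there exists u ∈ dom L(t,y,·) such that |u−v| ≤ k|x−y| and L(t,y,u) ≤ L(t,x,v) + w. -/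
/-!
Both directions go through the biconjugate identity `H = H**` (Fenchel–Moreau). For (b) ⇒ (a),
`H_x(p) = sup_v (⟪v, p⟫ - L_x(v))` and each term is bounded via the `u` given by (b) and
Fenchel–Young for `L_y(u)`. For (a) ⇒ (b), let `r = k‖x - y‖` and
`K = {(v, c) | ∃ u, ‖u - v‖ ≤ r ∧ L_y(u) ≤ c}`, a closed convex set (a compact ball plus the closed
epigraph of `L_y`). If `(v, L_x(v) + w) ∉ K`, separation gives an affine `⟪ζ, ·⟫ - β` below `K`
and above that point. Shifting along the ball turns this into `H_y(ζ) = L_y*(ζ) ≤ β - r‖ζ‖`, so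
`H_x(ζ) ≤ β + w` by (a) and `L_x(v) ≥ ⟪v, ζ⟫ - β - w > L_x(v)`.
-/

open Filter Topology MeasureTheory Set Metric
open scoped RealInnerProductSpace Pointwise

noncomputable section

section Separation

variable {E : Type*}

def IsUpwardClosed (C : Set (E × ℝ)) : Prop :=
  ∀ ⦃q : E⦄ ⦃r r' : ℝ⦄, (q, r) ∈ C → r ≤ r' → (q, r') ∈ C

def realEpigraph (φ : E → EReal) : Set (E × ℝ) :=
  {z | φ z.1 ≤ z.2}

theorem isUpwardClosed_realEpigraph (φ : E → EReal) : IsUpwardClosed (realEpigraph φ) :=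
  fun _ _ _ hq hr => hq.trans (EReal.coe_le_coe_iff.2 hr)

theorem LowerSemicontinuous.isClosed_realEpigraph [TopologicalSpace E] {φ : E → EReal}
    (hφ : LowerSemicontinuous φ) : IsClosed (realEpigraph φ) :=
  hφ.isClosed_epigraph.preimage
    (continuous_fst.prodMk (continuous_coe_real_ereal.comp continuous_snd))

theorem EConvex.convex_realEpigraph [AddCommMonoid E] [Module ℝ E] {φ : E → EReal}
    (hφ : EConvex φ) : Convex ℝ (realEpigraph φ) := by
  rintro ⟨q₁, r₁⟩ h₁ ⟨q₂, r₂⟩ h₂ a b ha hb hab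
  calc φ (a • q₁ + b • q₂) ≤ (a : EReal) * φ q₁ + (b : EReal) * φ q₂ := hφ q₁ q₂ a b ha hb hab
    _ ≤ (a : EReal) * r₁ + (b : EReal) * r₂ :=
      add_le_add (mul_le_mul_of_nonneg_left h₁ (EReal.coe_nonneg.2 ha))
        (mul_le_mul_of_nonneg_left h₂ (EReal.coe_nonneg.2 hb))
    _ = ((a • r₁ + b • r₂ : ℝ) : EReal) := by norm_cast

variable [NormedAddCommGroup E] [InnerProductSpace ℝ E]

def IsAffineMinorant (C : Set (E × ℝ)) (ζ : E) (β : ℝ) : Prop :=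
  ∀ ⦃q : E⦄ ⦃r : ℝ⦄, (q, r) ∈ C → ⟪ζ, q⟫ - β ≤ r

theorem isClosed_setOf_isAffineMinorant (C : Set (E × ℝ)) :
    IsClosed {z : E × ℝ | IsAffineMinorant C z.1 z.2} := by
  have : {z : E × ℝ | IsAffineMinorant C z.1 z.2} = ⋂ x ∈ C, {z | ⟪z.1, x.1⟫ - z.2 ≤ x.2} := by
    ext z
    simp [IsAffineMinorant]
  rw [this]
  exact isClosed_biInter fun x _ => isClosed_le (by fun_prop) continuous_const

theorem convex_setOf_isAffineMinorant (C : Set (E × ℝ)) :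
    Convex ℝ {z : E × ℝ | IsAffineMinorant C z.1 z.2} := by
  rintro ⟨ζ₁, β₁⟩ h₁ ⟨ζ₂, β₂⟩ h₂ a b ha hb hab q r hqr
  have e : ⟪a • ζ₁ + b • ζ₂, q⟫ - (a * β₁ + b * β₂)
      = a * (⟪ζ₁, q⟫ - β₁) + b * (⟪ζ₂, q⟫ - β₂) := by
    rw [inner_add_left, real_inner_smul_left, real_inner_smul_left]; ring
  show ⟪a • ζ₁ + b • ζ₂, q⟫ - (a * β₁ + b * β₂) ≤ r
  rw [e, ← one_mul r, ← hab]
  linarith [mul_le_mul_of_nonneg_left (h₁ hqr) ha, mul_le_mul_of_nonneg_left (h₂ hqr) hb]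

theorem exists_inner_add_mul_lt_of_notMem [CompleteSpace E] {C : Set (E × ℝ)}
    (hco : Convex ℝ C) (hcl : IsClosed C) {v : E} {c : ℝ} (hvc : (v, c) ∉ C) :
    ∃ (ξ : E) (s α : ℝ), (∀ ⦃q r⦄, (q, r) ∈ C → ⟪ξ, q⟫ + s * r < α) ∧ α < ⟪ξ, v⟫ + s * c := by
  obtain ⟨f, α, hC, hv⟩ := geometric_hahn_banach_closed_point hco hcl hvc
  set ξ := (InnerProductSpace.toDual ℝ E).symm (f.comp (ContinuousLinearMap.inl ℝ E ℝ))
  have hf : ∀ q r, f (q, r) = ⟪ξ, q⟫ + f (0, 1) * r := fun q r => by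
    have : ((q, r) : E × ℝ) = (q, 0) + r • ((0 : E), (1 : ℝ)) := by simp
    rw [this, map_add, map_smul, InnerProductSpace.toDual_symm_apply, smul_eq_mul, mul_comm]
    rfl
  exact ⟨ξ, f (0, 1), α, fun q r hqr => hf q r ▸ hC _ hqr, hf v c ▸ hv⟩

theorem IsUpwardClosed.nonpos_of_forall_inner_add_mul_lt {C : Set (E × ℝ)} (hC : IsUpwardClosed C)
    {q : E} {r : ℝ} (hqr : (q, r) ∈ C) {ξ : E} {s α : ℝ}
    (hsep : ∀ ⦃q r⦄, (q, r) ∈ C → ⟪ξ, q⟫ + s * r < α) : s ≤ 0 := by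
  by_contra! hs
  have hgap : 0 ≤ (α - ⟪ξ, q⟫ - s * r) / s := div_nonneg (by linarith [hsep hqr]) hs.le
  have := hsep (hC hqr (le_add_of_nonneg_right hgap))
  rw [mul_add, mul_div_cancel₀ _ hs.ne'] at this
  linarith

theorem IsUpwardClosed.exists_affine_or_vertical_separation [CompleteSpace E] {C : Set (E × ℝ)}
    (hC : IsUpwardClosed C) (hco : Convex ℝ C) (hcl : IsClosed C) {v : E} {c : ℝ}
    (hvc : (v, c) ∉ C) :
    (∃ ζ β, IsAffineMinorant C ζ β ∧ c < ⟪ζ, v⟫ - β) ∨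
      ∃ ξ α, (∀ ⦃q r⦄, (q, r) ∈ C → ⟪ξ, q⟫ < α) ∧ α < ⟪ξ, v⟫ := by
  obtain ⟨ξ, s, α, hsep, hv⟩ := exists_inner_add_mul_lt_of_notMem hco hcl hvc
  rcases lt_trichotomy s 0 with hs | rfl | hs
  · have hS : 0 < -s := neg_pos.2 hs
    refine .inl ⟨(-s)⁻¹ • ξ, α / -s, fun q r hqr => ?_, ?_⟩
    · rw [real_inner_smul_left, inv_mul_eq_div, ← sub_div, div_le_iff₀ hS]
      linarith [hsep hqr]
    · rw [real_inner_smul_left, inv_mul_eq_div, ← sub_div, lt_div_iff₀ hS]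
      linarith
  · exact .inr ⟨ξ, α, fun q r hqr => by simpa using hsep hqr, by simpa using hv⟩
  · -- with `s > 0` the half-space contains no vertical ray, so the upward closed `C` is empty
    refine .inl ⟨0, -(c + 1), fun q r hqr => ?_, by simp⟩
    exact absurd (hC.nonpos_of_forall_inner_add_mul_lt hqr hsep) hs.not_ge

theorem IsUpwardClosed.exists_isAffineMinorant [CompleteSpace E] {C : Set (E × ℝ)}
    (hC : IsUpwardClosed C) (hco : Convex ℝ C) (hcl : IsClosed C) {v : E} {c c' : ℝ}
    (hmem : (v, c') ∈ C) (hvc : (v, c) ∉ C) : ∃ ζ β, IsAffineMinorant C ζ β := by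
  rcases hC.exists_affine_or_vertical_separation hco hcl hvc with ⟨ζ, β, hζ, -⟩ | ⟨ξ, α, hsep, hv⟩
  · exact ⟨ζ, β, hζ⟩
  · exact absurd (hsep hmem) hv.not_gt

theorem IsAffineMinorant.exists_of_notMem [CompleteSpace E] {C : Set (E × ℝ)} {ζ₀ : E} {β₀ : ℝ}
    (hmin : IsAffineMinorant C ζ₀ β₀) (hC : IsUpwardClosed C) (hco : Convex ℝ C)
    (hcl : IsClosed C) {v : E} {c : ℝ} (hvc : (v, c) ∉ C) :
    ∃ ζ β, IsAffineMinorant C ζ β ∧ c < ⟪ζ, v⟫ - β := by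
  rcases hC.exists_affine_or_vertical_separation hco hcl hvc with h | ⟨ξ, α, hsep, hv⟩
  · exact h
  -- a vertical separating hyperplane is tilted by adding a large multiple of it to `ζ₀`
  obtain ⟨N, hN⟩ := exists_nat_gt ((c - (⟪ζ₀, v⟫ - β₀)) / (⟪ξ, v⟫ - α))
  rw [div_lt_iff₀ (sub_pos.2 hv)] at hN
  refine ⟨ζ₀ + (N : ℝ) • ξ, β₀ + N * α, fun q r hqr => ?_, ?_⟩
  · rw [inner_add_left, real_inner_smul_left]
    nlinarith [hmin hqr, hsep hqr, N.cast_nonneg (α := ℝ)]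
  · rw [inner_add_left, real_inner_smul_left]
    linarith

end Separation

section Thickening

variable {E : Type*} [NormedAddCommGroup E]

-- the epigraph of `v ↦ inf {φ u | ‖u - v‖ ≤ r}`, the inf-convolution of `φ` with the indicator
-- of a ball
def thickenedEpigraph (φ : E → EReal) (r : ℝ) : Set (E × ℝ) :=
  {z | ∃ u, ‖u - z.1‖ ≤ r ∧ φ u ≤ z.2}

theorem isUpwardClosed_thickenedEpigraph (φ : E → EReal) (r : ℝ) :
    IsUpwardClosed (thickenedEpigraph φ r) :=
  fun _ _ _ ⟨u, hu, hφu⟩ hr => ⟨u, hu, hφu.trans (EReal.coe_le_coe_iff.2 hr)⟩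

theorem thickenedEpigraph_eq_add (φ : E → EReal) (r : ℝ) :
    thickenedEpigraph φ r = realEpigraph φ + closedBall 0 r ×ˢ {0} := by
  ext ⟨v, c⟩
  constructor
  · rintro ⟨u, hu, hφu⟩
    refine ⟨(u, c), hφu, (v - u, 0), ⟨?_, rfl⟩, by simp⟩
    rwa [mem_closedBall_zero_iff, norm_sub_rev]
  · rintro ⟨⟨u, c'⟩, hφu, ⟨b, _⟩, ⟨hb, rfl⟩, hsum⟩
    obtain ⟨rfl, rfl⟩ := Prod.mk.inj hsum
    exact ⟨u, by simpa using hb, by simpa [realEpigraph] using hφu⟩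

theorem IsClosed.thickenedEpigraph [ProperSpace E] {φ : E → EReal}
    (hφ : IsClosed (realEpigraph φ)) (r : ℝ) : IsClosed (thickenedEpigraph φ r) :=
  thickenedEpigraph_eq_add φ r ▸
    hφ.add_right_of_isCompact ((isCompact_closedBall _ _).prod isCompact_singleton)

theorem Convex.thickenedEpigraph [NormedSpace ℝ E] {φ : E → EReal}
    (hφ : Convex ℝ (realEpigraph φ)) (r : ℝ) : Convex ℝ (thickenedEpigraph φ r) :=
  thickenedEpigraph_eq_add φ r ▸ hφ.add ((convex_closedBall _ _).prod (convex_singleton _))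

variable [InnerProductSpace ℝ E]

theorem inner_le_inner_add_mul_norm {u v : E} {r : ℝ} (h : ‖u - v‖ ≤ r) (ζ : E) :
    ⟪ζ, v⟫ ≤ ⟪ζ, u⟫ + r * ‖ζ‖ := calc
  ⟪ζ, v⟫ = ⟪ζ, u⟫ + ⟪ζ, v - u⟫ := by rw [inner_sub_right]; ring
  _ ≤ ⟪ζ, u⟫ + ‖ζ‖ * ‖v - u‖ := by gcongr; exact real_inner_le_norm _ _
  _ ≤ ⟪ζ, u⟫ + r * ‖ζ‖ := by rw [norm_sub_rev, mul_comm]; gcongr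

theorem exists_norm_le_inner_eq (ζ : E) {r : ℝ} (hr : 0 ≤ r) :
    ∃ b : E, ‖b‖ ≤ r ∧ ⟪ζ, b⟫ = r * ‖ζ‖ := by
  rcases eq_or_ne ζ 0 with rfl | hζ
  · exact ⟨0, by simpa using hr, by simp⟩
  have hζ' : ‖ζ‖ ≠ 0 := norm_ne_zero_iff.2 hζ
  refine ⟨(r / ‖ζ‖) • ζ, ?_, ?_⟩
  · rw [norm_smul, Real.norm_of_nonneg (by positivity), div_mul_cancel₀ _ hζ']
  · rw [real_inner_smul_right, real_inner_self_eq_norm_sq]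
    field_simp

theorem IsAffineMinorant.to_thickenedEpigraph {φ : E → EReal} {ζ : E} {β : ℝ}
    (h : IsAffineMinorant (realEpigraph φ) ζ β) (r : ℝ) :
    IsAffineMinorant (thickenedEpigraph φ r) ζ (β + r * ‖ζ‖) := by
  rintro v c ⟨u, hu, hφu⟩
  linarith [h (show (u, c) ∈ realEpigraph φ from hφu), inner_le_inner_add_mul_norm hu ζ]

theorem IsAffineMinorant.of_thickenedEpigraph {φ : E → EReal} {ζ : E} {β r : ℝ}
    (h : IsAffineMinorant (thickenedEpigraph φ r) ζ β) (hr : 0 ≤ r) :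
    IsAffineMinorant (realEpigraph φ) ζ (β - r * ‖ζ‖) := by
  intro u c hφu
  obtain ⟨b, hb, hζb⟩ := exists_norm_le_inner_eq ζ hr
  have := h (show (u + b, c) ∈ thickenedEpigraph φ r from ⟨u, by simpa using hb, hφu⟩)
  rw [inner_add_right, hζb] at this
  linarith

end Thickening

section Conjugate

variable {n : ℕ} {φ ψ : Eucl n → EReal} {r w : ℝ}

theorem coe_inner_sub_le_eConj (φ : Eucl n → EReal) (v p : Eucl n) :
    ((⟪v, p⟫ : ℝ) : EReal) - φ p ≤ eConj φ v :=
  le_iSup (fun p => ((⟪v, p⟫ : ℝ) : EReal) - φ p) p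

theorem eConj_le_coe_iff {ζ : Eucl n} {β : ℝ} :
    eConj φ ζ ≤ β ↔ IsAffineMinorant (realEpigraph φ) ζ β := by
  refine ⟨fun h q r hq => ?_, fun h => iSup_le fun q => ?_⟩
  · have := (EReal.sub_le_sub le_rfl hq).trans ((coe_inner_sub_le_eConj φ ζ q).trans h)
    rw [← EReal.coe_sub, EReal.coe_le_coe_iff] at this
    linarith
  · induction hq : φ q using EReal.rec with
    | bot =>
      exact absurd (h (q := q) (r := ⟪ζ, q⟫ - β - 1) (by simp [realEpigraph, hq])) (by linarith)
    | coe m =>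
      rw [← EReal.coe_sub, EReal.coe_le_coe_iff]
      linarith [h (show (q, m) ∈ realEpigraph φ from hq.le)]
    | top => simp

theorem realEpigraph_eConj (φ : Eucl n → EReal) :
    realEpigraph (eConj φ) = {z | IsAffineMinorant (realEpigraph φ) z.1 z.2} :=
  Set.ext fun _ => eConj_le_coe_iff

theorem isAffineMinorant_realEpigraph_eConj {p : Eucl n} {m : ℝ} (h : φ p ≤ m) :
    IsAffineMinorant (realEpigraph (eConj φ)) p m := fun u c hu => by
  have := eConj_le_coe_iff.1 hu (show (p, m) ∈ realEpigraph φ from h)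
  rw [real_inner_comm]
  linarith

theorem EProper.eConj_ne_bot (hφ : EProper φ) (v : Eucl n) : eConj φ v ≠ ⊥ := by
  obtain ⟨p, hp⟩ := hφ.2
  lift φ p to ℝ using ⟨hp, hφ.1 p⟩ with m hm
  have h := coe_inner_sub_le_eConj φ v p
  rw [← hm, ← EReal.coe_sub] at h
  exact ne_bot_of_le_ne_bot (EReal.coe_ne_bot _) h

theorem EProper.le_eConj_eConj (hp : EProper φ) (hc : EConvex φ) (hl : LowerSemicontinuous φ)
    (p : Eucl n) : φ p ≤ eConj (eConj φ) p := by
  have hup := isUpwardClosed_realEpigraph φ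
  have hco := hc.convex_realEpigraph
  have hcl := hl.isClosed_realEpigraph
  obtain ⟨p₀, hp₀⟩ := hp.2
  lift φ p₀ to ℝ using ⟨hp₀, hp.1 p₀⟩ with m₀ hm₀
  obtain ⟨ζ₀, β₀, hmin⟩ := hup.exists_isAffineMinorant hco hcl (v := p₀) (c := m₀ - 1)
    (show φ p₀ ≤ m₀ from hm₀.ge)
    (show ¬φ p₀ ≤ ((m₀ - 1 : ℝ) : EReal) by rw [← hm₀, EReal.coe_le_coe_iff]; linarith)
  refine EReal.ge_of_forall_gt_iff_ge.1 fun c hc => ?_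
  obtain ⟨ζ, β, hζ, hsep⟩ := hmin.exists_of_notMem hup hco hcl (v := p) (not_le.2 hc)
  calc (c : EReal) ≤ ((⟪p, ζ⟫ - β : ℝ) : EReal) := by
        rw [real_inner_comm]; exact EReal.coe_le_coe_iff.2 hsep.le
    _ = ((⟪p, ζ⟫ : ℝ) : EReal) - β := EReal.coe_sub _ _
    _ ≤ ((⟪p, ζ⟫ : ℝ) : EReal) - eConj φ ζ := EReal.sub_le_sub le_rfl (eConj_le_coe_iff.2 hζ)
    _ ≤ eConj (eConj φ) p := coe_inner_sub_le_eConj _ _ _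

theorem exists_near_eConj_le_of_le_add (hψp : EProper ψ) (hψc : EConvex ψ)
    (hψl : LowerSemicontinuous ψ) (hr : 0 ≤ r)
    (hle : ∀ p, φ p ≤ ψ p + ((r * ‖p‖ + w : ℝ) : EReal)) {v : Eucl n} {a : ℝ}
    (hv : eConj φ v ≤ a) : ∃ u, ‖u - v‖ ≤ r ∧ eConj ψ u ≤ ((a + w : ℝ) : EReal) := by
  obtain ⟨p₀, hp₀⟩ := hψp.2
  have hmin : IsAffineMinorant (thickenedEpigraph (eConj ψ) r) p₀ ((ψ p₀).toReal + r * ‖p₀‖) :=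
    (isAffineMinorant_realEpigraph_eConj (EReal.le_coe_toReal hp₀)).to_thickenedEpigraph r
  have hco : Convex ℝ (realEpigraph (eConj ψ)) :=
    realEpigraph_eConj ψ ▸ convex_setOf_isAffineMinorant _
  have hcl : IsClosed (realEpigraph (eConj ψ)) :=
    realEpigraph_eConj ψ ▸ isClosed_setOf_isAffineMinorant _
  by_contra! hfar
  have hvK : (v, a + w) ∉ thickenedEpigraph (eConj ψ) r := fun ⟨u, hu, hψu⟩ =>
    (hfar u hu).not_ge hψu
  obtain ⟨ζ, β, hζ, hsep⟩ :=
    hmin.exists_of_notMem (isUpwardClosed_thickenedEpigraph _ r) (hco.thickenedEpigraph r)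
      (hcl.thickenedEpigraph r) hvK
  have hψζ : ψ ζ ≤ ((β - r * ‖ζ‖ : ℝ) : EReal) :=
    (hψp.le_eConj_eConj hψc hψl ζ).trans (eConj_le_coe_iff.2 (hζ.of_thickenedEpigraph hr))
  have hφζ : φ ζ ≤ ((β + w : ℝ) : EReal) := calc
    φ ζ ≤ ψ ζ + ((r * ‖ζ‖ + w : ℝ) : EReal) := hle ζ
    _ ≤ ((β - r * ‖ζ‖ : ℝ) : EReal) + ((r * ‖ζ‖ + w : ℝ) : EReal) := add_le_add_left hψζ _
    _ = ((β + w : ℝ) : EReal) := by rw [← EReal.coe_add]; ring_nf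
  have := eConj_le_coe_iff.1 hv (show (ζ, β + w) ∈ realEpigraph φ from hφζ)
  rw [real_inner_comm] at this
  linarith

theorem le_add_of_forall_exists_near (hφp : EProper φ) (hφc : EConvex φ)
    (hφl : LowerSemicontinuous φ) (hψ : ∀ p, ψ p ≠ ⊥)
    (hnear : ∀ v, eConj φ v ≠ ⊤ → ∃ u, eConj ψ u ≠ ⊤ ∧ ‖u - v‖ ≤ r ∧
      eConj ψ u ≤ eConj φ v + ((w : ℝ) : EReal)) (p : Eucl n) :
    φ p ≤ ψ p + ((r * ‖p‖ + w : ℝ) : EReal) := by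
  rcases eq_or_ne (ψ p) ⊤ with htop | htop
  · rw [htop, EReal.top_add_coe]
    exact le_top
  lift ψ p to ℝ using ⟨htop, hψ p⟩ with m hm
  rw [← EReal.coe_add]
  refine (hφp.le_eConj_eConj hφc hφl p).trans (eConj_le_coe_iff.2 fun v c hv => ?_)
  obtain ⟨u, -, hu, hψu⟩ := hnear v (ne_top_of_le_ne_top (EReal.coe_ne_top c) hv)
  have hψuc : eConj ψ u ≤ ((c + w : ℝ) : EReal) :=
    hψu.trans (by rw [EReal.coe_add]; gcongr; exact hv)
  have hFY := eConj_le_coe_iff.1 hψuc (show (p, m) ∈ realEpigraph ψ from hm.ge)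
  rw [real_inner_comm] at hFY
  linarith [inner_le_inner_add_mul_norm hu p]

end Conjugate

theorem hamiltonian_lipschitz_iff_lagrangian_lipschitz_general (n : ℕ)
    (k w : ℝ) (hk : 0 ≤ k) (x y : Eucl n)
    (Hx Hy : Eucl n → EReal)
    (hxp : EProper Hx) (hxc : EConvex Hx) (hxl : LowerSemicontinuous Hx)
    (hyp : EProper Hy) (hyc : EConvex Hy) (hyl : LowerSemicontinuous Hy) :
    -- (a)
    ((∀ p : Eucl n, Hx p ≤ Hy p + ((k * ‖p‖ * ‖x - y‖ + w : ℝ) : EReal)) ↔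
    -- (b)
      (∀ v : Eucl n, eConj Hx v ≠ ⊤ →
        ∃ u : Eucl n, eConj Hy u ≠ ⊤ ∧ ‖u - v‖ ≤ k * ‖x - y‖ ∧
          eConj Hy u ≤ eConj Hx v + ((w : ℝ) : EReal))) := by
  simp only [mul_right_comm k ‖_‖ ‖x - y‖]
  constructor
  · intro ha v hv
    lift eConj Hx v to ℝ using ⟨hv, hxp.eConj_ne_bot v⟩ with a hLv
    obtain ⟨u, hu, hLu⟩ := exists_near_eConj_le_of_le_add hyp hyc hyl (by positivity) ha hLv.ge
    exact ⟨u, ne_top_of_le_ne_top (EReal.coe_ne_top _) hLu, hu, by rwa [← EReal.coe_add]⟩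
  · exact le_add_of_forall_exists_near hxp hxc hxl hyp.1

/-- Proposition 2.6 of the paper. For fixed `t, x, y` and constants
`k, w ≥ 0`, given proper convex lower semicontinuous `H(t,x,·)`, `H(t,y,·)` with conjugates
`L(t,x,·) = H*(t,x,·)`, `L(t,y,·) = H*(t,y,·)`, condition (a) is equivalent to (b). -/
theorem hamiltonian_lipschitz_iff_lagrangian_lipschitz (n : ℕ)
    (k w : ℝ) (hk : 0 ≤ k) (hw : 0 ≤ w) (x y : Eucl n)
    (Hx Hy : Eucl n → EReal)
    (hxp : EProper Hx) (hxc : EConvex Hx) (hxl : LowerSemicontinuous Hx)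
    (hyp : EProper Hy) (hyc : EConvex Hy) (hyl : LowerSemicontinuous Hy) :
    -- (a)
    ((∀ p : Eucl n, Hx p ≤ Hy p + ((k * ‖p‖ * ‖x - y‖ + w : ℝ) : EReal)) ↔
    -- (b)
      (∀ v : Eucl n, eConj Hx v ≠ ⊤ →
        ∃ u : Eucl n, eConj Hy u ≠ ⊤ ∧ ‖u - v‖ ≤ k * ‖x - y‖ ∧
          eConj Hy u ≤ eConj Hx v + ((w : ℝ) : EReal))) :=
  hamiltonian_lipschitz_iff_lagrangian_lipschitz_general n k w hk x y Hx Hy hxp hxc hxl hyp hyc hyl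
end
end

section
/- Suppose H : [0,T]×ℝⁿ×ℝⁿ → ℝ satisfies (H1) t-measurability, (H2) continuity in (x,p), (H3) convexity in p, and (HLC): for every R > 0 there exist a measurable k_R : [0,T] → [0,∞), a modulus w_R, and a null set N_R such that |H(t,x,p) − H(t,y,p)| ≤ k_R(t)|p||x−y| + w_R(t,|x−y|) for all t ∈ [0,T]\N_R, x,y ∈ B_R, p ∈ ℝⁿ. Let L(t,x,v) := sup_{p∈ℝⁿ}(⟨v,p⟩ − H(t,x,p)) and E_L(t,x) be its epigraph in v. Then for every R > 0, all t ∈ [0,T]\N_R, and all x,y ∈ B_R, the (extended) Hausdorff distance satisfies ℋ(E_L(t,x), E_L(t,y)) ≤ 2k_R(t)|x−y| + 2w_R(t,|x−y|). -/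
open Filter Topology MeasureTheory Set Metric
open scoped RealInnerProductSpace Pointwise

noncomputable section

/-! If `|h₁ p − h₂ p| ≤ K‖p‖ + c` with `h₂` convex and continuous, take `(v, η)` in the epigraph
of `h₁*`. The convex function `p ↦ h₂ p − ⟪v, p⟫ + η + c` lies above `−K‖·‖`, so separating its
strict epigraph from the hypograph of `−K‖·‖` (Hahn–Banach) yields a linear minorant `⟪a, ·⟫` with
`‖a‖ ≤ K`. Then `(v + a, η + c)` lies in the epigraph of `h₂*`, at distance `max K c` from `(v, η)`.
For `h₁ = H t x`, `h₂ = H t y` the hypothesis (HLC) gives `K = k(t)‖x − y‖` and `c = w(t, ‖x − y‖)`. -/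

section Sandwich

variable {E : Type*} [NormedAddCommGroup E] [NormedSpace ℝ E]

lemma ContinuousLinearMap.opNorm_le_of_le_mul_norm_add (ℓ : StrongDual ℝ E) {K C : ℝ}
    (hK : 0 ≤ K) (hℓ : ∀ p, ℓ p ≤ K * ‖p‖ + C) : ‖ℓ‖ ≤ K := by
  have hhom : ∀ p, ℓ p ≤ K * ‖p‖ := by
    intro p
    by_contra! hlt
    set d := ℓ p - K * ‖p‖
    have hd : 0 < d := sub_pos.2 hlt
    set s := (|C| + 1) / d
    have hs : 0 < s := by positivity
    have hsd : s * d = |C| + 1 := div_mul_cancel₀ _ hd.ne'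
    have := hℓ (s • p)
    rw [map_smul, smul_eq_mul, norm_smul, Real.norm_of_nonneg hs.le] at this
    nlinarith [le_abs_self C]
  refine ℓ.opNorm_le_bound hK fun p => abs_le.2 ⟨?_, hhom p⟩
  exact neg_le.1 (by simpa using hhom (-p))

lemma ConvexOn.exists_separation_of_neg_mul_norm_le {F : E → ℝ} (hF : ConvexOn ℝ univ F)
    (hFc : Continuous F) {K : ℝ} (hK : 0 ≤ K) (hlb : ∀ p, -(K * ‖p‖) ≤ F p) :
    ∃ (g : StrongDual ℝ E) (β u : ℝ),
      (∀ p t, F p < t → g p + t * β < u) ∧ ∀ p, u ≤ g p - K * ‖p‖ * β := by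
  have hS : Convex ℝ {q : E × ℝ | q.1 ∈ univ ∧ F q.1 < q.2} := hF.convex_strict_epigraph
  have hSo : IsOpen {q : E × ℝ | q.1 ∈ univ ∧ F q.1 < q.2} := by
    simpa using isOpen_lt (hFc.comp continuous_fst) continuous_snd
  have hT : Convex ℝ {q : E × ℝ | q.1 ∈ univ ∧ q.2 ≤ -(K • ‖q.1‖)} :=
    ((convexOn_norm convex_univ).smul hK).neg.convex_hypograph
  have hdisj : Disjoint {q : E × ℝ | q.1 ∈ univ ∧ F q.1 < q.2}
      {q : E × ℝ | q.1 ∈ univ ∧ q.2 ≤ -(K • ‖q.1‖)} :=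
    disjoint_left.2 fun q hqS hqT => (hlb q.1).not_gt (hqS.2.trans_le hqT.2)
  obtain ⟨f, u, hfS, hfT⟩ := geometric_hahn_banach_open hS hSo hT hdisj
  have hsplit : ∀ p t, f (p, t) = f.comp (.inl ℝ E ℝ) p + t * f (0, 1) := fun p t => by
    have hpt : ((p, t) : E × ℝ) = (p, 0) + t • (0, 1) := by simp
    rw [hpt, map_add, map_smul, smul_eq_mul]
    rfl
  refine ⟨f.comp (.inl ℝ E ℝ), f (0, 1), u, fun p t h => hsplit p t ▸ hfS _ ⟨trivial, h⟩,
    fun p => ?_⟩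
  have := hfT (p, -(K * ‖p‖)) ⟨trivial, by simp⟩
  rw [hsplit] at this
  linarith

lemma ConvexOn.exists_opNorm_le_and_le {F : E → ℝ} (hF : ConvexOn ℝ univ F)
    (hFc : Continuous F) {K : ℝ} (hK : 0 ≤ K) (hlb : ∀ p, -(K * ‖p‖) ≤ F p) :
    ∃ ℓ : StrongDual ℝ E, ‖ℓ‖ ≤ K ∧ ∀ p, ℓ p ≤ F p := by
  obtain ⟨g, β, u, hS, hT⟩ := hF.exists_separation_of_neg_mul_norm_le hFc hK hlb
  have hu : u ≤ 0 := by simpa using hT 0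
  have hβ : β < 0 := by
    by_contra! hβ
    have := hS 0 (max (F 0) 0 + 1) (by linarith [le_max_left (F 0) 0])
    simp only [map_zero, zero_add] at this
    nlinarith [le_max_right (F 0) 0]
  set ℓ := (-β)⁻¹ • g
  have hgℓ : ∀ p, g p = -β * ℓ p := fun p => by simp [ℓ, field, hβ.ne]
  have hneg : ∀ p, (-ℓ) p ≤ K * ‖p‖ + u / β := fun p => by
    have := hT p
    rw [hgℓ] at this
    rw [neg_apply, ← sub_le_iff_le_add', le_div_iff_of_neg hβ]
    linarith
  refine ⟨ℓ, by simpa using (-ℓ).opNorm_le_of_le_mul_norm_add hK hneg, fun p => ?_⟩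
  refine le_of_forall_gt_imp_ge_of_dense fun t ht => ?_
  have := hS p t ht
  rw [hgℓ] at this
  nlinarith

end Sandwich

section ConjugateEpigraph

variable {E : Type*} [NormedAddCommGroup E] [InnerProductSpace ℝ E] [CompleteSpace E]

def conjEpigraph (h : E → ℝ) : Set (E × ℝ) :=
  {q | ∀ p, ⟪q.1, p⟫ - h p ≤ q.2}

lemma infEDist_conjEpigraph_le {h₁ h₂ : E → ℝ} (hconv : ConvexOn ℝ univ h₂)
    (hcont : Continuous h₂) {K c : ℝ} (hK : 0 ≤ K) (hc : 0 ≤ c)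
    (hle : ∀ p, h₁ p ≤ h₂ p + (K * ‖p‖ + c)) {q : E × ℝ} (hq : q ∈ conjEpigraph h₁) :
    infEDist q (conjEpigraph h₂) ≤ ENNReal.ofReal (max K c) := by
  obtain ⟨v, η⟩ := q
  have hF : ConvexOn ℝ univ fun p => h₂ p - ⟪v, p⟫ + (η + c) :=
    (hconv.sub ((innerₛₗ ℝ v).concaveOn convex_univ)).add_const _
  obtain ⟨ℓ, hℓK, hℓF⟩ := hF.exists_opNorm_le_and_le (by fun_prop) hK fun p => by
    linarith [hle p, hq p]
  set a := (InnerProductSpace.toDual ℝ E).symm ℓ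
  have hmem : (v + a, η + c) ∈ conjEpigraph h₂ := fun p => by
    have : ⟪a, p⟫ = ℓ p := InnerProductSpace.toDual_symm_apply
    simp only [inner_add_left, this]
    linarith [hℓF p]
  calc infEDist (v, η) (conjEpigraph h₂)
      ≤ edist (v, η) (v + a, η + c) := infEDist_le_edist_of_mem hmem
    _ = ENNReal.ofReal (max ‖a‖ c) := by
      simp [edist_dist, dist_eq_norm, abs_of_nonneg hc]
    _ ≤ ENNReal.ofReal (max K c) := by
      gcongr
      simpa [a] using hℓK

lemma hausdorffEDist_conjEpigraph_le {h₁ h₂ : E → ℝ} (hconv₁ : ConvexOn ℝ univ h₁)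
    (hconv₂ : ConvexOn ℝ univ h₂) (hcont₁ : Continuous h₁) (hcont₂ : Continuous h₂) {K c : ℝ}
    (hK : 0 ≤ K) (hc : 0 ≤ c) (hle : ∀ p, |h₁ p - h₂ p| ≤ K * ‖p‖ + c) :
    hausdorffEDist (conjEpigraph h₁) (conjEpigraph h₂) ≤ ENNReal.ofReal (max K c) :=
  hausdorffEDist_le_of_infEDist
    (fun _ hq => infEDist_conjEpigraph_le hconv₂ hcont₂ hK hc
      (fun p => by linarith [(abs_le.1 (hle p)).2]) hq)
    (fun _ hq => infEDist_conjEpigraph_le hconv₁ hcont₁ hK hc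
      (fun p => by linarith [(abs_le.1 (hle p)).1]) hq)

end ConjugateEpigraph

lemma epiL_eq_conjEpigraph {n : ℕ} (H : ℝ → Eucl n → Eucl n → ℝ) (t : ℝ) (x : Eucl n) :
    epiL H t x = conjEpigraph (H t x) := by
  ext q
  simp only [epiL, LFT, conjEpigraph, mem_ofPred_eq, iSup_le_iff, EReal.coe_le_coe_iff]

theorem epigraph_hausdorff_estimate_general (n : ℕ) (T : ℝ)
    (H : ℝ → Eucl n → Eucl n → ℝ)
    (h2 : ∀ t ∈ Icc (0 : ℝ) T, Continuous fun q : Eucl n × Eucl n => H t q.1 q.2)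
    (h3 : ∀ t ∈ Icc (0 : ℝ) T, ∀ x : Eucl n, ConvexOn ℝ univ (H t x))
    (R : ℝ)
    (k : ℝ → ℝ) (hk0 : ∀ t, 0 ≤ k t)
    (w : ℝ → ℝ → ℝ) (hw : IsModulus w)
    (N : Set ℝ)
    (hHLC : ∀ t ∈ Icc (0 : ℝ) T \ N, ∀ x ∈ closedBall (0 : Eucl n) R,
      ∀ y ∈ closedBall (0 : Eucl n) R, ∀ p : Eucl n,
      |H t x p - H t y p| ≤ k t * ‖p‖ * ‖x - y‖ + w t ‖x - y‖) :
    ∀ t ∈ Icc (0 : ℝ) T \ N, ∀ x ∈ closedBall (0 : Eucl n) R,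
      ∀ y ∈ closedBall (0 : Eucl n) R,
      EMetric.hausdorffEdist (epiL H t x) (epiL H t y) ≤
        ENNReal.ofReal (2 * k t * ‖x - y‖ + 2 * w t ‖x - y‖) := by
  intro t ht x hx y hy
  have hK : 0 ≤ k t * ‖x - y‖ := mul_nonneg (hk0 t) (norm_nonneg _)
  have hc : 0 ≤ w t ‖x - y‖ := (hw.2 t).1 _
  have hcont : ∀ z, Continuous (H t z) := fun z => (h2 t ht.1).comp (.prodMk_right z)
  rw [epiL_eq_conjEpigraph, epiL_eq_conjEpigraph]
  calc hausdorffEDist (conjEpigraph (H t x)) (conjEpigraph (H t y))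
      ≤ ENNReal.ofReal (max (k t * ‖x - y‖) (w t ‖x - y‖)) :=
        hausdorffEDist_conjEpigraph_le (h3 t ht.1 x) (h3 t ht.1 y) (hcont x) (hcont y) hK hc
          fun p => (hHLC t ht x hx y hy p).trans_eq (by ring)
    _ ≤ ENNReal.ofReal (2 * k t * ‖x - y‖ + 2 * w t ‖x - y‖) := by
      gcongr
      exact max_le (by linarith) (by linarith)

/-- Corollary 2.5 of the paper. Under (H1)–(H3) and (HLC) (with data
`k`, `w`, `N` for a radius `R`), the epigraph map satisfies the Hausdorff-distance estimate
`ℋ(E_L(t,x), E_L(t,y)) ≤ 2 k(t)|x−y| + 2 w(t,|x−y|)` for `t ∈ [0,T]\N` and `x, y ∈ B_R`. -/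
theorem epigraph_hausdorff_estimate (n : ℕ) (T : ℝ) (hT : 0 ≤ T)
    (H : ℝ → Eucl n → Eucl n → ℝ)
    (h1 : ∀ (x p : Eucl n), Measurable fun t => H t x p)
    (h2 : ∀ t ∈ Icc (0 : ℝ) T, Continuous fun q : Eucl n × Eucl n => H t q.1 q.2)
    (h3 : ∀ t ∈ Icc (0 : ℝ) T, ∀ x : Eucl n, ConvexOn ℝ univ (H t x))
    (R : ℝ) (hR : 0 < R)
    (k : ℝ → ℝ) (hkm : Measurable k) (hk0 : ∀ t, 0 ≤ k t)
    (w : ℝ → ℝ → ℝ) (hw : IsModulus w)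
    (N : Set ℝ) (hN : volume N = 0)
    (hHLC : ∀ t ∈ Icc (0 : ℝ) T \ N, ∀ x ∈ closedBall (0 : Eucl n) R,
      ∀ y ∈ closedBall (0 : Eucl n) R, ∀ p : Eucl n,
      |H t x p - H t y p| ≤ k t * ‖p‖ * ‖x - y‖ + w t ‖x - y‖) :
    ∀ t ∈ Icc (0 : ℝ) T \ N, ∀ x ∈ closedBall (0 : Eucl n) R,
      ∀ y ∈ closedBall (0 : Eucl n) R,
      EMetric.hausdorffEdist (epiL H t x) (epiL H t y) ≤
        ENNReal.ofReal (2 * k t * ‖x - y‖ + 2 * w t ‖x - y‖) :=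
  epigraph_hausdorff_estimate_general n T H h2 h3 R k hk0 w hw N hHLC
end
end

section
/- Let H_i, H : [0,T]×ℝⁿ×ℝⁿ → ℝ, i ∈ ℕ, be continuous and convex in the last variable p, with L_i, L their Legendre–Fenchel conjugates in p and E_{L_i}(t,x), E_L(t,x) the epigraphs {(v,η) ∈ ℝⁿ×ℝ : L_i(t,x,v) ≤ η}, {(v,η) : L(t,x,v) ≤ η}. If H_i → H uniformly on compact subsets of [0,T]×ℝⁿ×ℝⁿ, then for every sequence (t_i,x_i) → (t,x) in [0,T]×ℝⁿ, the Painlevé–Kuratowski limit lim_{i→∞} E_{L_i}(t_i,x_i) exists and equals E_L(t,x); that is, limsup_{i→∞} E_{L_i}(t_i,x_i) ⊂ E_L(t,x) ⊂ liminf_{i→∞} E_{L_i}(t_i,x_i). -/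
open Filter Topology MeasureTheory Set Metric
open scoped RealInnerProductSpace Pointwise

noncomputable section

/-!
Put `g i = H_i(t_i, x_i, ·)` and `f = H(t, x, ·)`. Joint continuity of `H` and uniform
convergence on compacts give `g i → f` uniformly on balls, so the limsup inclusion is a
pointwise limit in the inequalities `⟪v, p⟫ - g i p ≤ η`.

For the liminf inclusion, `⟪v, ·⟫ - η` is an affine minorant of `f`, hence up to `δ` one of
`g i` on a large ball of radius `R`. Convexity spreads this to the bound `-δ - K‖p‖` with
`K = O(1/R)` on the whole space, and the minimiser `p₀` of `g i - ⟪v, ·⟫ + K‖·‖²/2` gives, by its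
first-order condition, an exact affine minorant of `g i` with slope `v - K p₀`, which is close
to `v`.
-/

section ConvexLowerBound

variable {E : Type*} [NormedAddCommGroup E]

theorem ConvexOn.neg_sub_mul_norm_le [NormedSpace ℝ E] {h : E → ℝ} (hh : ConvexOn ℝ univ h)
    {R δ : ℝ} (hR : 0 < R) (hball : ∀ p : E, ‖p‖ ≤ R → -δ ≤ h p) (p : E) :
    -δ - (δ + h 0) / R * ‖p‖ ≤ h p := by
  have h0 : 0 ≤ δ + h 0 := by linarith [hball 0 (by simpa using hR.le)]
  by_cases hp : ‖p‖ ≤ R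
  · have : 0 ≤ (δ + h 0) / R * ‖p‖ := by positivity
    linarith [hball p hp]
  have hp0 : 0 < ‖p‖ := hR.trans (not_le.1 hp)
  set s := R / ‖p‖
  have hs0 : 0 < s := by positivity
  have hs1 : s ≤ 1 := (div_le_one hp0).2 (not_le.1 hp).le
  have hsp : -δ ≤ h (s • p) := hball _ (by simp [s, norm_smul, abs_of_pos hR, hp0.ne'])
  have hconv : h (s • p) ≤ (1 - s) * h 0 + s * h p := by
    simpa using hh.2 (mem_univ 0) (mem_univ p) (sub_nonneg.2 hs1) hs0.le (by ring)
  have hscale : s * ((δ + h 0) / R * ‖p‖) = δ + h 0 := by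
    simp only [s]
    field_simp
  refine le_of_mul_le_mul_left ?_ hs0
  nlinarith

end ConvexLowerBound

section Proximal

variable {E : Type*} [NormedAddCommGroup E] [InnerProductSpace ℝ E]

theorem ConvexOn.sub_inner_le_of_forall_add_sq_norm_le {h : E → ℝ} (hh : ConvexOn ℝ univ h)
    {c : ℝ} {p₀ : E} (hmin : ∀ p, h p₀ + c / 2 * ‖p₀‖ ^ 2 ≤ h p + c / 2 * ‖p‖ ^ 2) (p : E) :
    h p₀ - c * ⟪p₀, p - p₀⟫ ≤ h p := by
  set d := p - p₀
  have hstep : ∀ σ ∈ Ioc (0 : ℝ) 1, h p₀ - c * ⟪p₀, d⟫ - σ * (c / 2 * ‖d‖ ^ 2) ≤ h p := by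
    rintro σ ⟨hσ0, hσ1⟩
    have hconv : h (p₀ + σ • d) ≤ (1 - σ) * h p₀ + σ * h p := by
      have hpt : p₀ + σ • d = (1 - σ) • p₀ + σ • p := by
        simp only [d, smul_sub, sub_smul, one_smul]; abel
      rw [hpt]
      exact hh.2 (mem_univ p₀) (mem_univ p) (sub_nonneg.2 hσ1) hσ0.le (by ring)
    have hnorm : ‖p₀ + σ • d‖ ^ 2 = ‖p₀‖ ^ 2 + 2 * σ * ⟪p₀, d⟫ + σ ^ 2 * ‖d‖ ^ 2 := by
      rw [norm_add_sq_real, real_inner_smul_right, norm_smul, Real.norm_eq_abs, mul_pow, sq_abs]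
      ring
    refine le_of_mul_le_mul_left ?_ hσ0
    linear_combination hmin (p₀ + σ • d) + hconv + c / 2 * hnorm
  have hlim : Tendsto (fun σ : ℝ => h p₀ - c * ⟪p₀, d⟫ - σ * (c / 2 * ‖d‖ ^ 2)) (𝓝[>] 0)
      (𝓝 (h p₀ - c * ⟪p₀, d⟫)) := by
    refine tendsto_nhdsWithin_of_tendsto_nhds (Continuous.tendsto' ?_ 0 _ (by simp))
    fun_prop
  exact le_of_tendsto hlim (mem_of_superset (Ioc_mem_nhdsGT one_pos) hstep)

theorem ConvexOn.exists_affine_minorant [FiniteDimensional ℝ E] {h : E → ℝ}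
    (hh : ConvexOn ℝ univ h) {δ K M : ℝ} (hK : 0 < K) (hcone : ∀ p, -δ - K * ‖p‖ ≤ h p)
    (hM : h 0 + δ ≤ M) :
    ∃ u : E, ‖u‖ ≤ 2 * K + √(2 * K * M) ∧ ∀ p, ⟪u, p⟫ - (δ + K / 2) ≤ h p := by
  set G : E → ℝ := fun p => h p + K / 2 * ‖p‖ ^ 2
  have hlow : ∀ p, K / 2 * (‖p‖ - 1) ^ 2 - (δ + K / 2) ≤ G p := fun p => by
    linear_combination hcone p
  have hcoer : Tendsto G (cocompact E) atTop := by
    have hsq : Tendsto (fun r : ℝ => K / 2 * (r + -1) ^ 2 + -(δ + K / 2)) atTop atTop :=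
      tendsto_atTop_add_const_right _ _ <| Tendsto.const_mul_atTop (by positivity) <|
        (tendsto_pow_atTop two_ne_zero).comp (tendsto_atTop_add_const_right _ _ tendsto_id)
    refine tendsto_atTop_mono hlow ?_
    simpa only [sub_eq_add_neg, Function.comp_def] using hsq.comp tendsto_norm_cocompact_atTop
  have hGc : Continuous G := hh.locallyLipschitz.continuous.add (by fun_prop)
  obtain ⟨p₀, hp₀⟩ := hGc.exists_forall_le hcoer
  have hsub := hh.sub_inner_le_of_forall_add_sq_norm_le hp₀
  have hG0 : h p₀ + K / 2 * ‖p₀‖ ^ 2 ≤ h 0 := by simpa [G] using hp₀ 0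
  have hG1 : K / 2 * (‖p₀‖ - 1) ^ 2 - (δ + K / 2) ≤ h p₀ + K / 2 * ‖p₀‖ ^ 2 := hlow p₀
  have hM0 : 0 ≤ M := by
    have := hcone 0
    rw [norm_zero] at this
    linarith
  refine ⟨-(K • p₀), ?_, fun p => ?_⟩
  · rw [norm_neg, norm_smul, Real.norm_of_nonneg hK.le]
    have hsq := Real.sq_sqrt (by positivity : 0 ≤ 2 * K * M)
    have hquad : (K * ‖p₀‖) ^ 2 ≤ 2 * K * M + 2 * K * (K * ‖p₀‖) := by
      nlinarith [hcone p₀]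
    nlinarith [Real.sqrt_nonneg (2 * K * M), norm_nonneg p₀]
  · have hp := hsub p
    rw [inner_sub_right, real_inner_self_eq_norm_sq] at hp
    rw [inner_neg_left, real_inner_smul_left]
    nlinarith [sq_nonneg (‖p₀‖ - 1)]

end Proximal

theorem TendstoUniformlyOn.comp_tendstoUniformlyOn {α β γ ι : Type*} [UniformSpace β]
    [UniformSpace γ] {l : Filter ι} {F : ι → β → γ} {f : β → γ} {s : Set β} {G : ι → α → β}
    {g : α → β} {t : Set α} (hF : TendstoUniformlyOn F f l s) (hf : UniformContinuousOn f s)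
    (hG : TendstoUniformlyOn G g l t) (hGs : ∀ i, ∀ x ∈ t, G i x ∈ s)
    (hgs : ∀ x ∈ t, g x ∈ s) :
    TendstoUniformlyOn (fun i x => F i (G i x)) (fun x => f (g x)) l t := by
  intro u hu
  obtain ⟨w, hw, hwu⟩ := comp_mem_uniformity_sets hu
  filter_upwards [hf.comp_tendstoUniformlyOn_eventually (.of_forall hGs) hgs hG w hw, hF w hw]
    with i hfG hFf x hx
  exact hwu ⟨f (G i x), hfG x hx, hFf _ (hGs i x hx)⟩

theorem exists_tendsto_eventually_mem_of_forall_dist_lt {X : Type*} [PseudoMetricSpace X]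
    {S : ℕ → Set X} {q : X} (h : ∀ ε > 0, ∀ᶠ i in atTop, ∃ y ∈ S i, dist y q < ε) :
    ∃ qi : ℕ → X, Tendsto qi atTop (𝓝 q) ∧ ∀ᶠ i in atTop, qi i ∈ S i := by
  have hd : Tendsto (fun i => infDist q (S i)) atTop (𝓝 0) := by
    refine Metric.tendsto_atTop.2 fun ε hε => eventually_atTop.1 ?_
    filter_upwards [h ε hε] with i ⟨y, hy, hyq⟩
    rw [Real.dist_eq, sub_zero, abs_of_nonneg infDist_nonneg]
    exact (infDist_le_dist_of_mem hy).trans_lt (by rwa [dist_comm])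
  have hchoice : ∀ i : ℕ, ∃ y, (S i).Nonempty → y ∈ S i ∧
      dist y q < infDist q (S i) + 1 / ((i : ℝ) + 1) := fun i => by
    by_cases hne : (S i).Nonempty
    · obtain ⟨y, hy, hyq⟩ := (infDist_lt_iff hne).1 (lt_add_of_pos_right _ Nat.one_div_pos_of_nat)
      exact ⟨y, fun _ => ⟨hy, by rwa [dist_comm]⟩⟩
    · exact ⟨q, fun h => absurd h hne⟩
  choose qi hqi using hchoice
  have hne : ∀ᶠ i in atTop, (S i).Nonempty := by
    filter_upwards [h 1 one_pos] with i ⟨y, hy, _⟩ using ⟨y, hy⟩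
  refine ⟨qi, tendsto_iff_dist_tendsto_zero.2 ?_, ?_⟩
  · refine squeeze_zero' (.of_forall fun i => dist_nonneg) ?_
      (by simpa only [add_zero] using hd.add tendsto_one_div_add_atTop_nhds_zero_nat)
    filter_upwards [hne] with i hi using (hqi i hi).2.le
  · filter_upwards [hne] with i hi using (hqi i hi).1

section ConjugateEpigraph

variable {E : Type*} [NormedAddCommGroup E] [InnerProductSpace ℝ E]

def conjugateEpigraph (g : E → ℝ) : Set (E × ℝ) :=
  {q | ∀ p, ⟪q.1, p⟫ - g p ≤ q.2}

theorem epiL_eq_conjugateEpigraph {n : ℕ} (H : ℝ → Eucl n → Eucl n → ℝ) (t : ℝ) (x : Eucl n) :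
    epiL H t x = conjugateEpigraph (H t x) := by
  ext q
  exact iSup_le_iff.trans (forall_congr' fun p => EReal.coe_le_coe_iff)

theorem mem_conjugateEpigraph_of_tendsto {g : ℕ → E → ℝ} {f : E → ℝ}
    (hg : ∀ p, Tendsto (fun i => g i p) atTop (𝓝 (f p))) {φ : ℕ → ℕ}
    (hφ : Tendsto φ atTop atTop) {qj : ℕ → E × ℝ} {q : E × ℝ} (hq : Tendsto qj atTop (𝓝 q))
    (hmem : ∀ j, qj j ∈ conjugateEpigraph (g (φ j))) : q ∈ conjugateEpigraph f := fun p =>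
  le_of_tendsto_of_tendsto' ((hq.fst_nhds.inner tendsto_const_nhds).sub ((hg p).comp hφ))
    hq.snd_nhds fun j => hmem j p

theorem eventually_exists_mem_conjugateEpigraph_dist_lt [FiniteDimensional ℝ E]
    {g : ℕ → E → ℝ} {f : E → ℝ} (hconv : ∀ i, ConvexOn ℝ univ (g i))
    (hunif : ∀ R, TendstoUniformlyOn g f atTop (closedBall 0 R)) {q : E × ℝ}
    (hq : q ∈ conjugateEpigraph f) {ε : ℝ} (hε : 0 < ε) :
    ∀ᶠ i in atTop, ∃ y ∈ conjugateEpigraph (g i), dist y q < ε := by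
  obtain ⟨v, η⟩ := q
  set M := f 0 + η + 2
  have hM : 2 ≤ M := by linarith [show -f 0 ≤ η by simpa using hq 0]
  have hsmall : Tendsto (fun K : ℝ => 2 * K + √(2 * K * M)) (𝓝 0) (𝓝 0) := by
    simpa using (by fun_prop : Continuous fun K : ℝ => 2 * K + √(2 * K * M)).tendsto 0
  obtain ⟨K, ⟨hKu, hKε⟩, hK0 : 0 < K⟩ := (((hsmall.eventually (gt_mem_nhds hε)).and
    (gt_mem_nhds hε)).filter_mono nhdsWithin_le_nhds |>.and
    (self_mem_nhdsWithin : Ioi (0 : ℝ) ∈ 𝓝[>] 0)).exists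
  set δ := min 1 (ε / 2)
  -- the radius `M / K` makes the linear growth rate of `ConvexOn.neg_sub_mul_norm_le` at most `K`
  filter_upwards [Metric.tendstoUniformlyOn_iff.1 (hunif (M / K)) δ (by positivity)] with i hi
  set h : E → ℝ := fun p => g i p - ⟪v, p⟫ + η
  have hh : ConvexOn ℝ univ h :=
    ((hconv i).sub ((innerₛₗ ℝ v).concaveOn convex_univ)).add_const η
  have hclose : ∀ p, ‖p‖ ≤ M / K → |g i p - f p| < δ := fun p hp => by
    simpa [abs_sub_comm, Real.dist_eq] using hi p (by simpa using hp)
  have hball : ∀ p, ‖p‖ ≤ M / K → -δ ≤ h p := fun p hp => by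
    linarith [hq p, (abs_lt.1 (hclose p hp)).1]
  have hM0 : h 0 + δ ≤ M := by
    have := (abs_lt.1 (hclose 0 (by simp; positivity))).2
    simp only [h, inner_zero_right]
    linarith [min_le_left 1 (ε / 2)]
  have hcone : ∀ p, -δ - K * ‖p‖ ≤ h p := fun p => by
    have hslope : (δ + h 0) / (M / K) ≤ K := by
      rw [div_le_iff₀ (by positivity)]; field_simp; linarith
    nlinarith [hh.neg_sub_mul_norm_le (by positivity) hball p, norm_nonneg p]
  obtain ⟨u, hu, hup⟩ := hh.exists_affine_minorant hK0 hcone hM0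
  refine ⟨(v + u, η + (δ + K / 2)), fun p => ?_, ?_⟩
  · have := hup p
    simp only [h, inner_add_left] at this ⊢
    linarith
  · simp only [Prod.dist_eq, dist_self_add_left]
    rw [Real.norm_of_nonneg (by positivity)]
    exact max_lt (by linarith) (by linarith [min_le_right 1 (ε / 2)])

end ConjugateEpigraph

theorem tendstoUniformlyOn_closedBall_of_tendsto {n : ℕ} {T : ℝ}
    {Hi : ℕ → ℝ → Eucl n → Eucl n → ℝ} {H : ℝ → Eucl n → Eucl n → ℝ}
    (hHc : ContinuousOn (fun q : ℝ × Eucl n × Eucl n => H q.1 q.2.1 q.2.2)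
      (Icc (0 : ℝ) T ×ˢ (univ : Set (Eucl n × Eucl n))))
    (hunif : ∀ K : Set (ℝ × Eucl n × Eucl n), IsCompact K →
      K ⊆ Icc (0 : ℝ) T ×ˢ (univ : Set (Eucl n × Eucl n)) →
      TendstoUniformlyOn (fun i q => Hi i q.1 q.2.1 q.2.2)
        (fun q => H q.1 q.2.1 q.2.2) atTop K)
    {t : ℝ} (ht : t ∈ Icc 0 T) {x : Eucl n} {ti : ℕ → ℝ} {xi : ℕ → Eucl n}
    (hti : ∀ i, ti i ∈ Icc 0 T) (htt : Tendsto ti atTop (𝓝 t)) (hxt : Tendsto xi atTop (𝓝 x))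
    (R : ℝ) :
    TendstoUniformlyOn (fun i => Hi i (ti i) (xi i)) (H t x) atTop (closedBall 0 R) := by
  set K := Icc 0 T ×ˢ (insert x (range xi) ×ˢ closedBall (0 : Eucl n) R)
  have hKc : IsCompact K :=
    isCompact_Icc.prod (hxt.isCompact_insert_range.prod (isCompact_closedBall _ _))
  have hKsub : K ⊆ Icc 0 T ×ˢ univ := prod_mono subset_rfl (subset_univ _)
  have hlift : TendstoUniformlyOn (fun i (p : Eucl n) => (ti i, xi i, p)) (fun p => (t, x, p)) atTop
      (closedBall 0 R) := by
    refine Metric.tendstoUniformlyOn_iff.2 fun ε hε => ?_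
    filter_upwards [Metric.tendsto_nhds.1 htt ε hε, Metric.tendsto_nhds.1 hxt ε hε]
      with i hti hxi p _
    simp only [Prod.dist_eq, dist_self]
    rw [dist_comm t, dist_comm x]
    exact max_lt hti (max_lt hxi hε)
  exact (hunif K hKc hKsub).comp_tendstoUniformlyOn
    (hKc.uniformContinuousOn_of_continuous (hHc.mono hKsub)) hlift
    (fun i _ hp => ⟨hti i, mem_insert_of_mem _ (mem_range_self i), hp⟩)
    (fun _ hp => ⟨ht, mem_insert _ _, hp⟩)

theorem epigraph_kuratowski_convergence_general (n : ℕ) (T : ℝ)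
    (Hi : ℕ → ℝ → Eucl n → Eucl n → ℝ) (H : ℝ → Eucl n → Eucl n → ℝ)
    (hHc : ContinuousOn (fun q : ℝ × Eucl n × Eucl n => H q.1 q.2.1 q.2.2)
      (Icc (0 : ℝ) T ×ˢ (univ : Set (Eucl n × Eucl n))))
    (hHiconv : ∀ i, ∀ t ∈ Icc (0 : ℝ) T, ∀ x : Eucl n, ConvexOn ℝ univ (Hi i t x))
    (hunif : ∀ K : Set (ℝ × Eucl n × Eucl n), IsCompact K →
      K ⊆ Icc (0 : ℝ) T ×ˢ (univ : Set (Eucl n × Eucl n)) →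
      TendstoUniformlyOn (fun i q => Hi i q.1 q.2.1 q.2.2)
        (fun q => H q.1 q.2.1 q.2.2) atTop K) :
    ∀ t ∈ Icc (0 : ℝ) T, ∀ x : Eucl n, ∀ (ti : ℕ → ℝ) (xi : ℕ → Eucl n),
      (∀ i, ti i ∈ Icc (0 : ℝ) T) →
      Tendsto ti atTop (𝓝 t) → Tendsto xi atTop (𝓝 x) →
      -- limsup E_{L_i}(t_i,x_i) ⊆ E_L(t,x)
      ({q : Eucl n × ℝ | ∃ φ : ℕ → ℕ, StrictMono φ ∧
          ∃ qj : ℕ → Eucl n × ℝ, Tendsto qj atTop (𝓝 q) ∧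
            ∀ j, qj j ∈ epiL (Hi (φ j)) (ti (φ j)) (xi (φ j))} ⊆ epiL H t x) ∧
      -- E_L(t,x) ⊆ liminf E_{L_i}(t_i,x_i)
      (epiL H t x ⊆
        {q : Eucl n × ℝ | ∃ qi : ℕ → Eucl n × ℝ, Tendsto qi atTop (𝓝 q) ∧
          ∀ᶠ i in atTop, qi i ∈ epiL (Hi i) (ti i) (xi i)}) := by
  intro t ht x ti xi hti htt hxt
  have hloc := tendstoUniformlyOn_closedBall_of_tendsto hHc hunif ht hti htt hxt
  simp only [epiL_eq_conjugateEpigraph]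
  refine ⟨fun q ⟨φ, hφ, qj, hqj, hmem⟩ => ?_, fun q hq => ?_⟩
  · exact mem_conjugateEpigraph_of_tendsto (fun p => (hloc ‖p‖).tendsto_at (by simp))
      hφ.tendsto_atTop hqj hmem
  · exact exists_tendsto_eventually_mem_of_forall_dist_lt fun _ hε =>
      eventually_exists_mem_conjugateEpigraph_dist_lt (fun i => hHiconv i _ (hti i) _) hloc hq hε

/-- Proposition 6.3 of the paper. If continuous Hamiltonians `H_i`,
convex in the last variable, converge to `H` uniformly on compact subsets of
`[0,T]×ℝⁿ×ℝⁿ`, then for every sequence `(t_i,x_i) → (t,x)` in `[0,T]×ℝⁿ` the epigraphs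
converge in the Painlevé–Kuratowski sense:
`limsup E_{L_i}(t_i,x_i) ⊆ E_L(t,x) ⊆ liminf E_{L_i}(t_i,x_i)`. -/
theorem epigraph_kuratowski_convergence (n : ℕ) (T : ℝ) (hT : 0 ≤ T)
    (Hi : ℕ → ℝ → Eucl n → Eucl n → ℝ) (H : ℝ → Eucl n → Eucl n → ℝ)
    (hHic : ∀ i, ContinuousOn (fun q : ℝ × Eucl n × Eucl n => Hi i q.1 q.2.1 q.2.2)
      (Icc (0 : ℝ) T ×ˢ (univ : Set (Eucl n × Eucl n))))
    (hHc : ContinuousOn (fun q : ℝ × Eucl n × Eucl n => H q.1 q.2.1 q.2.2)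
      (Icc (0 : ℝ) T ×ˢ (univ : Set (Eucl n × Eucl n))))
    (hHiconv : ∀ i, ∀ t ∈ Icc (0 : ℝ) T, ∀ x : Eucl n, ConvexOn ℝ univ (Hi i t x))
    (hHconv : ∀ t ∈ Icc (0 : ℝ) T, ∀ x : Eucl n, ConvexOn ℝ univ (H t x))
    (hunif : ∀ K : Set (ℝ × Eucl n × Eucl n), IsCompact K →
      K ⊆ Icc (0 : ℝ) T ×ˢ (univ : Set (Eucl n × Eucl n)) →
      TendstoUniformlyOn (fun i q => Hi i q.1 q.2.1 q.2.2)
        (fun q => H q.1 q.2.1 q.2.2) atTop K) :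
    ∀ t ∈ Icc (0 : ℝ) T, ∀ x : Eucl n, ∀ (ti : ℕ → ℝ) (xi : ℕ → Eucl n),
      (∀ i, ti i ∈ Icc (0 : ℝ) T) →
      Tendsto ti atTop (𝓝 t) → Tendsto xi atTop (𝓝 x) →
      -- limsup E_{L_i}(t_i,x_i) ⊆ E_L(t,x)
      ({q : Eucl n × ℝ | ∃ φ : ℕ → ℕ, StrictMono φ ∧
          ∃ qj : ℕ → Eucl n × ℝ, Tendsto qj atTop (𝓝 q) ∧
            ∀ j, qj j ∈ epiL (Hi (φ j)) (ti (φ j)) (xi (φ j))} ⊆ epiL H t x) ∧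
      -- E_L(t,x) ⊆ liminf E_{L_i}(t_i,x_i)
      (epiL H t x ⊆
        {q : Eucl n × ℝ | ∃ qi : ℕ → Eucl n × ℝ, Tendsto qi atTop (𝓝 q) ∧
          ∀ᶠ i in atTop, qi i ∈ epiL (Hi i) (ti i) (xi i)}) :=
  epigraph_kuratowski_convergence_general n T Hi H hHc hHiconv hunif
end
end

section
/- Let H_i, H : [0,T]×ℝⁿ×ℝⁿ → ℝ, i ∈ ℕ, be continuous and convex in the last variable p, with L_i, L their Legendre–Fenchel conjugates in p and E_{L_i}, E_L the corresponding epigraph maps. If for every R > 0 one has sup_{(t,x,p) ∈ [0,T]×B_R×ℝⁿ} |H_i(t,x,p) − H(t,x,p)|/(1+|p|) → 0 as i → ∞, then for every R > 0, sup_{(t,x) ∈ [0,T]×B_R} ℋ(E_{L_i}(t,x), E_L(t,x)) → 0 as i → ∞. -/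
open Filter Topology MeasureTheory Set Metric
open scoped RealInnerProductSpace Pointwise

noncomputable section

/-! If `(v, η) ∈ E_{L_i}(t,x)` and `|H_i − H| ≤ δ (1 + |p|)`, then `p ↦ ⟪v, p⟫ − δ|p| − η − δ` is a
concave minorant of the convex function `H(t,x,·)`. Separating the hypograph of the former from
the strict epigraph of the latter (Hahn–Banach) yields an affine function `⟪w, ·⟫ + β` in between;
comparing slopes along the ray through `v − w` gives `|v − w| ≤ δ`, and `(w, η + δ) ∈ E_L(t,x)`
is then `δ`-close to `(v, η)`. By symmetry the Hausdorff distance is at most `δ`. -/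

lemma nonpos_of_forall_pos_mul_le {l M : ℝ} (h : ∀ s > 0, s * l ≤ M) : l ≤ 0 := by
  by_contra! hl
  have := h ((|M| + 1) / l) (by positivity)
  rw [div_mul_cancel₀ _ hl.ne'] at this
  linarith [le_abs_self M]

lemma ConcaveOn.exists_affine_between {E : Type*} [TopologicalSpace E] [AddCommGroup E]
    [Module ℝ E] [IsTopologicalAddGroup E] [ContinuousSMul ℝ E] {φ g : E → ℝ}
    (hφ : ConcaveOn ℝ univ φ) (hg : ConvexOn ℝ univ g) (hgc : Continuous g) (hle : ∀ p, φ p ≤ g p) :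
    ∃ (ℓ : E →L[ℝ] ℝ) (β : ℝ), (∀ p, φ p ≤ ℓ p + β) ∧ ∀ p, ℓ p + β ≤ g p := by
  have hA : Convex ℝ {q : E × ℝ | g q.1 < q.2} := by simpa using hg.convex_strict_epigraph
  have hAo : IsOpen {q : E × ℝ | g q.1 < q.2} := isOpen_lt (hgc.comp continuous_fst) continuous_snd
  have hB : Convex ℝ {q : E × ℝ | q.2 ≤ φ q.1} := by simpa using hφ.convex_hypograph
  have hAB : Disjoint {q : E × ℝ | g q.1 < q.2} {q | q.2 ≤ φ q.1} :=
    Set.disjoint_left.2 fun q hqA hqB => (hqA.trans_le (hqB.trans (hle q.1))).false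
  obtain ⟨F, u, hFA, hFB⟩ := geometric_hahn_banach_open hA hAo hB hAB
  set ℓ := F.comp (ContinuousLinearMap.inl ℝ E ℝ)
  set lam := F (0, 1)
  have hF : ∀ p r, F (p, r) = ℓ p + r * lam := by
    intro p r
    rw [show (p, r) = (p, 0) + r • ((0 : E), (1 : ℝ)) by simp, map_add, map_smul, smul_eq_mul]
    rfl
  have hgF : ∀ p, ∀ s > 0, ℓ p + (g p + s) * lam < u := fun p s hs => by
    simpa [hF] using hFA (p, g p + s) (by simpa using hs)
  have hφF : ∀ p, u ≤ ℓ p + φ p * lam := fun p => by simpa [hF] using hFB (p, φ p) (le_refl (φ p))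
  -- `lam ≠ 0`: a vertical hyperplane cannot separate two sets that both project onto `E`.
  have hlam : lam < 0 := by
    refine lt_of_le_of_ne (nonpos_of_forall_pos_mul_le (M := u - ℓ 0 - g 0 * lam)
      fun s hs => by linarith [hgF 0 s hs]) fun h0 => ?_
    have h1 := hgF 0 1 one_pos
    have h2 := hφF 0
    rw [h0] at h1 h2
    linarith
  have hgu : ∀ p, ℓ p + g p * lam ≤ u := fun p => le_of_forall_pos_lt_add fun ε hε => by
    have := hgF p (ε / -lam) (div_pos hε (neg_pos.2 hlam))
    rw [add_mul, div_neg, neg_mul, div_mul_cancel₀ _ hlam.ne] at this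
    linarith
  have hval : ∀ p, ((-lam⁻¹) • ℓ) p + u / lam = (u - ℓ p) / lam := fun p => by
    simp only [smul_apply, smul_eq_mul]
    field_simp
    ring
  refine ⟨(-lam⁻¹) • ℓ, u / lam, fun p => ?_, fun p => ?_⟩
  · rw [hval, le_div_iff_of_neg hlam]
    linarith [hφF p]
  · rw [hval, div_le_iff_of_neg hlam]
    linarith [hgu p]

lemma exists_norm_sub_le_forall_inner_sub_le {E : Type*} [NormedAddCommGroup E]
    [InnerProductSpace ℝ E] [CompleteSpace E] {f g : E → ℝ} (hg : ConvexOn ℝ univ g)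
    (hgc : Continuous g) {δ : ℝ} (hδ : 0 ≤ δ) (hfg : ∀ p, f p ≤ g p + δ * (1 + ‖p‖))
    {v : E} {η : ℝ} (hv : ∀ p, ⟪v, p⟫ - f p ≤ η) :
    ∃ w : E, ‖v - w‖ ≤ δ ∧ ∀ p, ⟪w, p⟫ - g p ≤ η + δ := by
  have hφ : ConcaveOn ℝ univ fun p => ⟪v, p⟫ - δ * ‖p‖ - (η + δ) :=
    (((innerₛₗ ℝ v).concaveOn convex_univ).sub (ConvexOn.smul hδ (convexOn_norm convex_univ))).sub
      (convexOn_const _ convex_univ)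
  obtain ⟨ℓ, β, hφℓ, hℓg⟩ := hφ.exists_affine_between hg hgc fun p => by
    linarith [hv p, hfg p]
  set w := (InnerProductSpace.toDual ℝ E).symm ℓ
  have hw : ∀ p, ⟪w, p⟫ = ℓ p := fun _ => InnerProductSpace.toDual_symm_apply
  have hβ : -(η + δ) ≤ β := by simpa using hφℓ 0
  refine ⟨w, ?_, fun p => by linarith [hℓg p, hw p]⟩
  have hray : ∀ s > 0, s * (‖v - w‖ ^ 2 - δ * ‖v - w‖) ≤ β + (η + δ) := by
    intro s hs
    have h := hφℓ (s • (v - w))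
    have hlin : ⟪v, s • (v - w)⟫ - ⟪w, s • (v - w)⟫ = s * ‖v - w‖ ^ 2 := by
      rw [← inner_sub_left, real_inner_smul_right, real_inner_self_eq_norm_sq]
    rw [← hw, norm_smul, Real.norm_of_nonneg hs.le] at h
    linarith
  nlinarith [nonpos_of_forall_pos_mul_le hray, norm_nonneg (v - w)]

section Epigraph

variable {n : ℕ} {H H' : ℝ → Eucl n → Eucl n → ℝ} {t : ℝ} {x : Eucl n} {δ : ℝ}

lemma mem_epiL_iff {q : Eucl n × ℝ} : q ∈ epiL H t x ↔ ∀ p, ⟪q.1, p⟫ - H t x p ≤ q.2 := by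
  simp only [epiL, LFT, mem_ofPred_eq, iSup_le_iff, EReal.coe_le_coe_iff]

lemma exists_mem_epiL_edist_le (hconv : ConvexOn ℝ univ (H' t x)) (hδ : 0 ≤ δ)
    (hle : ∀ p, H t x p ≤ H' t x p + δ * (1 + ‖p‖)) {q : Eucl n × ℝ} (hq : q ∈ epiL H t x) :
    ∃ q' ∈ epiL H' t x, edist q q' ≤ ENNReal.ofReal δ := by
  obtain ⟨w, hvw, hw⟩ := exists_norm_sub_le_forall_inner_sub_le hconv
    hconv.locallyLipschitz.continuous hδ hle (mem_epiL_iff.1 hq)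
  refine ⟨(w, q.2 + δ), mem_epiL_iff.2 hw, (edist_le_ofReal hδ).2 ?_⟩
  rw [Prod.dist_eq, dist_eq_norm, Real.dist_eq, sub_add_cancel_left, abs_neg, abs_of_nonneg hδ]
  exact max_le hvw le_rfl

lemma hausdorffEdist_epiL_le (hconv : ConvexOn ℝ univ (H t x))
    (hconv' : ConvexOn ℝ univ (H' t x)) (hδ : 0 ≤ δ)
    (h : ∀ p, |H t x p - H' t x p| ≤ δ * (1 + ‖p‖)) :
    Metric.hausdorffEDist (epiL H t x) (epiL H' t x) ≤ ENNReal.ofReal δ :=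
  Metric.hausdorffEDist_le_of_mem_edist
    (fun _ hq => exists_mem_epiL_edist_le hconv' hδ (fun p => by linarith [(abs_le.1 (h p)).2]) hq)
    (fun _ hq => exists_mem_epiL_edist_le hconv hδ (fun p => by linarith [(abs_le.1 (h p)).1]) hq)

end Epigraph

theorem epigraph_hausdorff_convergence_general (n : ℕ) (T : ℝ)
    (Hi : ℕ → ℝ → Eucl n → Eucl n → ℝ) (H : ℝ → Eucl n → Eucl n → ℝ)
    (hHiconv : ∀ i, ∀ t ∈ Icc (0 : ℝ) T, ∀ x : Eucl n, ConvexOn ℝ univ (Hi i t x))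
    (hHconv : ∀ t ∈ Icc (0 : ℝ) T, ∀ x : Eucl n, ConvexOn ℝ univ (H t x))
    (hunif : ∀ R > (0 : ℝ), ∀ ε > (0 : ℝ), ∃ i₀ : ℕ, ∀ i ≥ i₀,
      ∀ t ∈ Icc (0 : ℝ) T, ∀ x ∈ closedBall (0 : Eucl n) R, ∀ p : Eucl n,
        |Hi i t x p - H t x p| ≤ ε * (1 + ‖p‖)) :
    ∀ R > (0 : ℝ), ∀ ε > (0 : ℝ), ∃ i₀ : ℕ, ∀ i ≥ i₀,
      ∀ t ∈ Icc (0 : ℝ) T, ∀ x ∈ closedBall (0 : Eucl n) R,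
        EMetric.hausdorffEdist (epiL (Hi i) t x) (epiL H t x) ≤ ENNReal.ofReal ε := by
  intro R hR ε hε
  obtain ⟨i₀, hi₀⟩ := hunif R hR ε hε
  exact ⟨i₀, fun i hi t ht x hx =>
    hausdorffEdist_epiL_le (hHiconv i t ht x) (hHconv t ht x) hε.le (hi₀ i hi t ht x hx)⟩

/-- Proposition 6.4 of the paper. If Hamiltonians `H_i`, convex in the
last variable, converge to `H` in the weighted uniform sense
`sup_{(t,x,p) ∈ [0,T]×B_R×ℝⁿ} |H_i − H|/(1+|p|) → 0` for every `R > 0`, then the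
epigraphs converge uniformly in the Hausdorff distance:
`sup_{(t,x) ∈ [0,T]×B_R} ℋ(E_{L_i}(t,x), E_L(t,x)) → 0` for every `R > 0`. -/
theorem epigraph_hausdorff_convergence (n : ℕ) (T : ℝ) (hT : 0 ≤ T)
    (Hi : ℕ → ℝ → Eucl n → Eucl n → ℝ) (H : ℝ → Eucl n → Eucl n → ℝ)
    (hHic : ∀ i, ContinuousOn (fun q : ℝ × Eucl n × Eucl n => Hi i q.1 q.2.1 q.2.2)
      (Icc (0 : ℝ) T ×ˢ (univ : Set (Eucl n × Eucl n))))
    (hHc : ContinuousOn (fun q : ℝ × Eucl n × Eucl n => H q.1 q.2.1 q.2.2)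
      (Icc (0 : ℝ) T ×ˢ (univ : Set (Eucl n × Eucl n))))
    (hHiconv : ∀ i, ∀ t ∈ Icc (0 : ℝ) T, ∀ x : Eucl n, ConvexOn ℝ univ (Hi i t x))
    (hHconv : ∀ t ∈ Icc (0 : ℝ) T, ∀ x : Eucl n, ConvexOn ℝ univ (H t x))
    (hunif : ∀ R > (0 : ℝ), ∀ ε > (0 : ℝ), ∃ i₀ : ℕ, ∀ i ≥ i₀,
      ∀ t ∈ Icc (0 : ℝ) T, ∀ x ∈ closedBall (0 : Eucl n) R, ∀ p : Eucl n,
        |Hi i t x p - H t x p| ≤ ε * (1 + ‖p‖)) :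
    ∀ R > (0 : ℝ), ∀ ε > (0 : ℝ), ∃ i₀ : ℕ, ∀ i ≥ i₀,
      ∀ t ∈ Icc (0 : ℝ) T, ∀ x ∈ closedBall (0 : Eucl n) R,
        EMetric.hausdorffEdist (epiL (Hi i) t x) (epiL H t x) ≤ ENNReal.ofReal ε :=
  epigraph_hausdorff_convergence_general n T Hi H hHiconv hHconv hunif
end
end
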